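/- arXiv:2509.17563 — 10 statements merged into one kernel-verified Lean document; each statement's English description precedes it below -/
import Mathlib

section
/- Let G be a finite abelian group, c : G → ℂ a function, and S ⊆ G nonempty. Let λ = max over nontrivial characters χ of |ĉ(χ)|. Then |(1/|S|)·Σ_{x∈S} c(x) − (1/|G|)·Σ_{g∈G} c(g)| ≤ λ/√|S|. -/
/-!
Plancherel for the characters of a finite abelian group gives
`|G| · ∑_{x ∈ S} c x = ĉ(1) · |S| + ∑_{ψ ≠ 1} ĉ(ψ) · conj (1̂_S(ψ))`, and `ĉ(1) = ∑_g c g`.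
Each nontrivial term is at most `λ · |1̂_S(ψ)|`, and by Cauchy–Schwarz and Parseval
`∑_ψ |1̂_S(ψ)| ≤ √|G| · √(|G| · |S|)`; dividing by `|G| · |S|` gives `λ / √|S|`.
-/

open Finset ComplexConjugate

lemma Finset.sum_mul_conj_indicator_one {α : Type*} [Fintype α] (f : α → ℂ) (S : Finset α) :
    ∑ a, f a * conj ((S : Set α).indicator 1 a) = ∑ a ∈ S, f a := by
  classical
  simp [Set.indicator_apply]

namespace AddChar

variable {α : Type*} [AddCommGroup α] [Fintype α]

/-- The coefficient `ĉ(ψ)` of the statement, for additive characters. -/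
def dft (f : α → ℂ) (ψ : AddChar α ℂ) : ℂ := ∑ a, f a * conj (ψ a)

lemma dft_zero (f : α → ℂ) : dft f 0 = ∑ a, f a := by simp [dft]

lemma conj_apply_mul_apply (ψ : AddChar α ℂ) (a b : α) : conj (ψ a) * ψ b = ψ (b - a) := by
  rw [← map_neg_eq_conj, ← map_add_eq_mul, neg_add_eq_sub]

lemma dft_mul_conj_dft (f g : α → ℂ) (ψ : AddChar α ℂ) :
    dft f ψ * conj (dft g ψ) = ∑ a, ∑ b, f a * conj (g b) * ψ (b - a) := by
  simp only [dft, map_sum, map_mul, Complex.conj_conj, sum_mul_sum, ← conj_apply_mul_apply]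
  exact sum_congr rfl fun a _ => sum_congr rfl fun b _ => by ring

theorem sum_dft_mul_conj_dft (f g : α → ℂ) :
    ∑ ψ : AddChar α ℂ, dft f ψ * conj (dft g ψ) = Fintype.card α * ∑ a, f a * conj (g a) := by
  classical
  simp_rw [dft_mul_conj_dft]
  rw [sum_comm]
  simp_rw [sum_comm (γ := AddChar α ℂ), ← mul_sum, sum_apply_eq_ite, sub_eq_zero]
  simp [mul_sum, mul_comm]

theorem sum_norm_dft_indicator_le (S : Finset α) :
    ∑ ψ : AddChar α ℂ, ‖dft ((S : Set α).indicator 1) ψ‖ ≤ Fintype.card α * √(#S : ℝ) := by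
  set u := dft ((S : Set α).indicator 1)
  have parseval : ∑ ψ : AddChar α ℂ, ‖u ψ‖ ^ 2 = Fintype.card α * #S := by
    have h := sum_dft_mul_conj_dft ((S : Set α).indicator 1) ((S : Set α).indicator 1)
    rw [sum_mul_conj_indicator_one] at h
    have hind : ∑ a ∈ S, (S : Set α).indicator (1 : α → ℂ) a = #S := by
      rw [sum_congr rfl fun a ha => Set.indicator_of_mem (mem_coe.2 ha) _]
      simp
    simp only [Complex.mul_conj', hind] at h
    exact_mod_cast h
  have cauchy_schwarz := sq_sum_le_card_mul_sum_sq (s := univ) (f := fun ψ : AddChar α ℂ => ‖u ψ‖)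
  rw [card_univ, card_eq, parseval] at cauchy_schwarz
  refine (pow_le_pow_iff_left₀ (by positivity) (by positivity) two_ne_zero).1 ?_
  rw [mul_pow, Real.sq_sqrt (by positivity)]
  linarith

theorem card_mul_sum_eq_sum_mul_card_add_sum_ne_zero (f : α → ℂ) (S : Finset α) :
    Fintype.card α * ∑ x ∈ S, f x = (∑ a, f a) * #S +
      ∑ ψ ∈ univ.erase 0, dft f ψ * conj (dft ((S : Set α).indicator 1) ψ) := by
  classical
  have h := sum_dft_mul_conj_dft f ((S : Set α).indicator 1)
  rw [sum_mul_conj_indicator_one, ← add_sum_erase _ _ (mem_univ 0), dft_zero f] at h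
  rw [← h, dft_zero]
  simp [Set.indicator_apply]

theorem norm_average_sub_average_le (f : α → ℂ) (S : Finset α) (hS : S.Nonempty) {lam : ℝ}
    (hlam : 0 ≤ lam) (hf : ∀ ψ ≠ 0, ‖dft f ψ‖ ≤ lam) :
    ‖(1 / (#S : ℂ)) * ∑ x ∈ S, f x - (1 / (Fintype.card α : ℂ)) * ∑ a, f a‖ ≤
      lam / √(#S : ℝ) := by
  set u := dft ((S : Set α).indicator 1)
  set R := ∑ ψ ∈ univ.erase 0, dft f ψ * conj (u ψ)
  have split : Fintype.card α * ∑ x ∈ S, f x = (∑ a, f a) * #S + R :=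
    card_mul_sum_eq_sum_mul_card_add_sum_ne_zero f S
  have hR : ‖R‖ ≤ lam * (Fintype.card α * √(#S : ℝ)) :=
    calc ‖R‖ ≤ ∑ ψ ∈ univ.erase 0, ‖dft f ψ * conj (u ψ)‖ := norm_sum_le _ _
      _ ≤ ∑ ψ ∈ univ.erase 0, lam * ‖u ψ‖ := sum_le_sum fun ψ hψ => by
          rw [norm_mul, Complex.norm_conj]
          exact mul_le_mul_of_nonneg_right (hf ψ (ne_of_mem_erase hψ)) (norm_nonneg _)
      _ ≤ ∑ ψ, lam * ‖u ψ‖ := sum_le_sum_of_subset_of_nonneg (erase_subset _ _)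
          fun _ _ _ => mul_nonneg hlam (norm_nonneg _)
      _ ≤ lam * (Fintype.card α * √(#S : ℝ)) := by
          rw [← mul_sum]
          exact mul_le_mul_of_nonneg_left (sum_norm_dft_indicator_le S) hlam
  have hs : (0 : ℝ) < #S := by exact_mod_cast hS.card_pos
  have hn : (0 : ℝ) < Fintype.card α := by exact_mod_cast Fintype.card_pos
  have diff : (1 / (#S : ℂ)) * ∑ x ∈ S, f x - (1 / (Fintype.card α : ℂ)) * ∑ a, f a =
      R / (#S * Fintype.card α) := by
    have hsC : (#S : ℂ) ≠ 0 := by exact_mod_cast hs.ne'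
    have hnC : (Fintype.card α : ℂ) ≠ 0 := by exact_mod_cast hn.ne'
    field_simp
    linear_combination split
  rw [diff, norm_div, norm_mul, Complex.norm_natCast, Complex.norm_natCast,
    div_le_div_iff₀ (by positivity) (Real.sqrt_pos.2 hs)]
  calc ‖R‖ * √(#S : ℝ) ≤ lam * (Fintype.card α * √(#S : ℝ)) * √(#S : ℝ) := by gcongr
    _ = lam * (#S * Fintype.card α) := by
        rw [mul_assoc, mul_assoc, Real.mul_self_sqrt hs.le]; ring

end AddChar

def MonoidHom.unitsEquivAddChar (G M : Type*) [Group G] [CommMonoid M] :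
    (G →* Mˣ) ≃ AddChar (Additive G) M :=
  MonoidHom.toHomUnitsMulEquiv.symm.toEquiv.trans (AddChar.toMonoidHomEquiv (A := Additive G)).symm

lemma MonoidHom.unitsEquivAddChar_apply {G M : Type*} [Group G] [CommMonoid M] (χ : G →* Mˣ)
    (g : G) : unitsEquivAddChar G M χ (Additive.ofMul g) = χ g := rfl

/-- Single-set consequence of the expander mixing lemma for abelian Cayley color graphs. -/
theorem stmt2 {G : Type*} [CommGroup G] [Fintype G] (c : G → ℂ)
    (S : Finset G) (hS : S.Nonempty) (lam : ℝ)
    (hlam : IsGreatest {x : ℝ | ∃ χ : G →* ℂˣ, χ ≠ 1 ∧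
      x = ‖∑ g : G, c g * (starRingEnd ℂ) (χ g : ℂ)‖} lam) :
    ‖(1 / (S.card : ℂ)) * (∑ x ∈ S, c x) -
        (1 / (Fintype.card G : ℂ)) * (∑ g : G, c g)‖ ≤
      lam / Real.sqrt (S.card : ℝ) := by
  obtain ⟨_, _, hlam_eq⟩ := hlam.1
  have hlam_nonneg : 0 ≤ lam := hlam_eq ▸ norm_nonneg _
  have key := AddChar.norm_average_sub_average_le (α := Additive G) (fun a => c a.toMul) S hS
    hlam_nonneg fun ψ hψ => hlam.2 ⟨(MonoidHom.unitsEquivAddChar G ℂ).symm ψ, ?_, ?_⟩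
  · rwa [Fintype.card_additive,
      Fintype.sum_equiv Additive.toMul (fun a => c a.toMul) c fun _ => rfl] at key
  · exact (MonoidHom.unitsEquivAddChar G ℂ).symm_apply_eq.not.2 hψ
  · simp_rw [← MonoidHom.unitsEquivAddChar_apply, Equiv.apply_symm_apply]
    exact congrArg norm (Fintype.sum_equiv Additive.toMul _ _ fun _ => rfl)
end

section
/- Let V be a subspace of 𝔽_q[x₁,…,x_m] spanned by monomials {x^i : i ∈ I} for a finite set I ⊆ ℕ^m with (0,…,0) ∈ I and, for each coordinate j, some (0,…,0,k_j,0,…,0) ∈ I (k_j in position j) with gcd(k_j, q−1) = 1. Then for distinct α, β ∈ 𝔽_q^m and any C, C' ∈ 𝔽_q^*, the polynomials p_{C,α}(x) = C·Σ_{i∈I} α^i x^i and p_{C',β}(x) = C'·Σ_{i∈I} β^i x^i are distinct elements of V. -/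
lemma pow_inj_aux {F : Type} [Field F] [Fintype F] {k : ℕ} (hk : 0 < k)
    (hg : Nat.gcd k (Fintype.card F - 1) = 1) {a b : F} (h : a ^ k = b ^ k) : a = b := by
  classical
  have hcop : (Nat.card Fˣ).Coprime k := by
    rw [Nat.card_eq_fintype_card, Fintype.card_units]
    exact Nat.Coprime.symm hg
  rcases eq_or_ne a 0 with rfl | ha
  · rw [zero_pow hk.ne'] at h
    exact (pow_eq_zero_iff hk.ne').mp h.symm |>.symm
  · rcases eq_or_ne b 0 with rfl | hb
    · rw [zero_pow hk.ne'] at h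
      exact absurd ((pow_eq_zero_iff hk.ne').mp h) ha
    · have hbij := hcop.pow_left_bijective (G := Fˣ)
      have h2 : Units.mk0 a ha = Units.mk0 b hb :=
        hbij.injective (by ext; simpa using h)
      simpa [Units.ext_iff] using h2

lemma coeff_sum_monomial {m : ℕ} {F : Type} [Field F] (I : Finset (Fin m →₀ ℕ))
    (c : (Fin m →₀ ℕ) → F) {d : Fin m →₀ ℕ} (hd : d ∈ I) :
    MvPolynomial.coeff d (∑ i ∈ I, MvPolynomial.monomial i (c i)) = c d := by
  rw [MvPolynomial.coeff_sum]
  simp [MvPolynomial.coeff_monomial, Finset.sum_ite_eq' I d c, hd]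

/-- For a monomial-basis subspace with property (*), the polynomials
`p_{C,α} = C · ∑_{i∈I} α^i x^i` and `p_{C',β} = C' · ∑_{i∈I} β^i x^i` with `α ≠ β` and
`C, C' ≠ 0` are distinct elements of `V`. -/
theorem stmt7 {m : ℕ} {F : Type} [Field F] [Fintype F]
    (I : Finset (Fin m →₀ ℕ)) (h0 : (0 : Fin m →₀ ℕ) ∈ I)
    (hpure : ∀ j : Fin m, ∃ k : ℕ, 0 < k ∧ Nat.gcd k (Fintype.card F - 1) = 1 ∧
      Finsupp.single j k ∈ I)
    (α β : Fin m → F) (hαβ : α ≠ β) (C C' : F) (hC : C ≠ 0) (hC' : C' ≠ 0) :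
    (∑ i ∈ I, MvPolynomial.monomial i (C * ∏ j : Fin m, α j ^ i j)) ∈
        Submodule.span F ((fun d => MvPolynomial.monomial d (1 : F)) '' I) ∧
    (∑ i ∈ I, MvPolynomial.monomial i (C' * ∏ j : Fin m, β j ^ i j)) ∈
        Submodule.span F ((fun d => MvPolynomial.monomial d (1 : F)) '' I) ∧
    (∑ i ∈ I, MvPolynomial.monomial i (C * ∏ j : Fin m, α j ^ i j)) ≠
      ∑ i ∈ I, MvPolynomial.monomial i (C' * ∏ j : Fin m, β j ^ i j) := by
  have hmem : ∀ (D : F) (γ : Fin m → F),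
      (∑ i ∈ I, MvPolynomial.monomial i (D * ∏ j : Fin m, γ j ^ i j)) ∈
        Submodule.span F ((fun d => MvPolynomial.monomial d (1 : F)) '' I) := by
    intro D γ
    refine Submodule.sum_mem _ fun i hi => ?_
    have : MvPolynomial.monomial i (D * ∏ j : Fin m, γ j ^ i j)
        = (D * ∏ j : Fin m, γ j ^ i j) • MvPolynomial.monomial i (1 : F) := by
      simp [MvPolynomial.smul_monomial]
    rw [this]
    exact Submodule.smul_mem _ _ (Submodule.subset_span ⟨i, hi, rfl⟩)
  refine ⟨hmem C α, hmem C' β, fun heq => ?_⟩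
  have hCC : C = C' := by
    have := congrArg (MvPolynomial.coeff 0) heq
    rw [coeff_sum_monomial I _ h0, coeff_sum_monomial I _ h0] at this
    simpa using this
  obtain ⟨j, hj⟩ : ∃ j, α j ≠ β j := Function.ne_iff.mp hαβ
  obtain ⟨k, hk, hg, hkI⟩ := hpure j
  have hc := congrArg (MvPolynomial.coeff (Finsupp.single j k)) heq
  rw [coeff_sum_monomial I _ hkI, coeff_sum_monomial I _ hkI] at hc
  have hprod : ∀ γ : Fin m → F, (∏ l : Fin m, γ l ^ (Finsupp.single j k) l) = γ j ^ k := by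
    intro γ
    rw [Finset.prod_eq_single j (fun l _ hl => by simp [Finsupp.single_apply, Ne.symm hl])
      (by simp)]
    simp
  rw [hprod, hprod, hCC] at hc
  have := mul_left_cancel₀ hC' hc
  exact hj (pow_inj_aux hk hg this)
end

section
/- Let V be a subspace of 𝔽_q[x₁,…,x_m] with property (*) (monomial basis indexed by I containing the zero tuple and, for each coordinate j, a tuple k_j·e_j with gcd(k_j,q−1)=1). For α ∈ 𝔽_q^m let V_α = {f ∈ V : f(α) = 0}. Then for distinct α, β ∈ 𝔽_q^m, every additive character χ of V that is trivial on both V_α and V_β is the trivial character; equivalently V_α^⊥ ∩ V_β^⊥ = {χ₀}. -/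
/-!
Pick `j` with `α_j ≠ β_j`. The polynomial `x_j^k - β_j^k` lies in `V` (it is a combination of the
monomials `x_j^k` and `1`) and vanishes at `β` but not at `α`, since `t ↦ t^k` is injective on
`𝔽_q` when `gcd(k, q - 1) = 1`. So evaluation at `α` is nonzero on `V_β`, which forces
`V_α + V_β = V`, and a character trivial on both summands is trivial.
-/

open MvPolynomial

theorem pow_left_injective_of_gcd_card_sub_one {F : Type*} [Field F] [Fintype F] {k : ℕ}
    (hk : k ≠ 0) (hgcd : Nat.gcd k (Fintype.card F - 1) = 1) :
    Function.Injective (fun a : F => a ^ k) := by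
  intro a b hab
  simp only at hab
  rcases eq_or_ne a 0 with rfl | ha
  · rw [zero_pow hk, eq_comm, pow_eq_zero_iff hk] at hab
    exact hab.symm
  rcases eq_or_ne b 0 with rfl | hb
  · rwa [zero_pow hk, pow_eq_zero_iff hk] at hab
  have hcop : (Nat.card Fˣ).Coprime k := by
    rwa [Nat.card_units, Nat.card_eq_fintype_card, Nat.Coprime, Nat.gcd_comm]
  have hunits : Units.mk0 a ha = Units.mk0 b hb :=
    hcop.pow_left_bijective.injective (Units.ext (by simpa using hab))
  simpa using congrArg Units.val hunits

theorem AddChar.eq_one_of_sup_eq_top {G R : Type*} [AddCommGroup G] [CommMonoid R]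
    (χ : AddChar G R) {A B : AddSubgroup G} (hAB : A ⊔ B = ⊤)
    (hA : ∀ a ∈ A, χ a = 1) (hB : ∀ b ∈ B, χ b = 1) : χ = 1 := by
  ext x
  obtain ⟨a, ha, b, hb, rfl⟩ := AddSubgroup.mem_sup.mp (hAB ▸ AddSubgroup.mem_top x)
  rw [AddChar.map_add_eq_mul, hA a ha, hB b hb, one_mul, AddChar.one_apply]

theorem LinearMap.ker_sup_ker_eq_top_of_mem_ker {K V : Type*} [Field K] [AddCommGroup V]
    [Module K V] {φ ψ : V →ₗ[K] K} {h : V} (hψ : ψ h = 0) (hφ : φ h ≠ 0) :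
    ker φ ⊔ ker ψ = ⊤ := by
  refine eq_top_iff.mpr ?_
  calc ⊤ = Submodule.span K {h} ⊔ ker φ := (span_singleton_sup_ker_eq_top φ hφ).symm
    _ ≤ ker φ ⊔ ker ψ := by
      rw [sup_comm]
      exact sup_le_sup_left ((Submodule.span_singleton_le_iff_mem h _).mpr hψ) _

theorem exists_mem_eval_eq_zero_eval_ne_zero {σ F : Type*} [CommRing F]
    {V : Submodule F (MvPolynomial σ F)} {g : MvPolynomial σ F}
    (hone : monomial 0 (1 : F) ∈ V) (hg : g ∈ V) {α β : σ → F} (hαβ : eval α g ≠ eval β g) :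
    ∃ h ∈ V, eval β h = 0 ∧ eval α h ≠ 0 := by
  refine ⟨g - eval β g • monomial 0 1, V.sub_mem hg (V.smul_mem _ hone), ?_, ?_⟩
  · simp
  · simpa [sub_eq_zero] using hαβ

/-- For a subspace `V` with property (*) and distinct `α, β ∈ 𝔽_q^m`, any additive character
of `V` that is trivial on both `V_α` and `V_β` is the trivial character:
`V_α^⊥ ∩ V_β^⊥ = {χ₀}`. -/
theorem stmt9 {m : ℕ} {F : Type} [Field F] [Fintype F]
    (V : Submodule F (MvPolynomial (Fin m) F)) (I : Finset (Fin m →₀ ℕ))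
    (hV : V = Submodule.span F ((fun d => MvPolynomial.monomial d (1 : F)) '' I))
    (h0 : (0 : Fin m →₀ ℕ) ∈ I)
    (hpure : ∀ j : Fin m, ∃ k : ℕ, 0 < k ∧ Nat.gcd k (Fintype.card F - 1) = 1 ∧
      Finsupp.single j k ∈ I)
    (α β : Fin m → F) (hαβ : α ≠ β)
    (χ : AddChar V ℂ)
    (hα : ∀ f : V, MvPolynomial.eval α (f : MvPolynomial (Fin m) F) = 0 → χ f = 1)
    (hβ : ∀ f : V, MvPolynomial.eval β (f : MvPolynomial (Fin m) F) = 0 → χ f = 1) :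
    χ = 1 := by
  obtain ⟨j, hj⟩ := Function.ne_iff.mp hαβ
  obtain ⟨k, hk, hgcd, hkI⟩ := hpure j
  have hmem : ∀ d ∈ I, monomial d (1 : F) ∈ V := fun d hd =>
    hV ▸ Submodule.subset_span ⟨d, hd, rfl⟩
  have hsep : eval α (monomial (Finsupp.single j k) (1 : F))
      ≠ eval β (monomial (Finsupp.single j k) (1 : F)) := by
    simpa [eval_monomial, Finsupp.prod_single_index] using
      (pow_left_injective_of_gcd_card_sub_one hk.ne' hgcd).ne hj
  obtain ⟨p, hpV, hpβ, hpα⟩ :=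
    exists_mem_eval_eq_zero_eval_ne_zero (hmem 0 h0) (hmem _ hkI) hsep
  let evalOn (γ : Fin m → F) : V →ₗ[F] F := (aeval γ).toLinearMap ∘ₗ V.subtype
  have hker := LinearMap.ker_sup_ker_eq_top_of_mem_ker (φ := evalOn α) (ψ := evalOn β)
    (h := ⟨p, hpV⟩) (by simpa [evalOn] using hpβ) (by simpa [evalOn] using hpα)
  refine χ.eq_one_of_sup_eq_top (A := (LinearMap.ker (evalOn α)).toAddSubgroup)
    (B := (LinearMap.ker (evalOn β)).toAddSubgroup) ?_
    (fun f hf => hα f ?_) (fun f hf => hβ f ?_)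
  · rw [← Submodule.sup_toAddSubgroup, hker, Submodule.top_toAddSubgroup]
  · simpa [evalOn] using hf
  · simpa [evalOn] using hf
end

section
/- Let V be a subspace of 𝔽_q[x₁,…,x_m] with property (*). Define N_q : V → ℕ by N_q(f) = |{α ∈ 𝔽_q^m : f(α) = 0}|. Then the symmetric matrix A indexed by V × V with entries A(f,f') = N_q(f − f') has exactly the eigenvalues q^(dim V + m − 1), q^(dim V − 1), and 0, with multiplicities 1, (q−1)·q^m, and |V| − (q−1)·q^m − 1, respectively. -/
/-!
Write `A = ∑ₐ Pₐ` with `Pₐ f f' = [f(a) = f'(a)]`. Since `1 ∈ V`, each evaluation `f ↦ f(a)`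
maps `V` onto `𝔽_q`; since the pure powers `x_j ^ k_j` lie in `V` and `x ↦ x ^ k_j` is injective
on `𝔽_q`, each pair evaluation `f ↦ (f(a), f(b))` with `a ≠ b` maps `V` onto `𝔽_q²`. So all
fibres have size `r = |V|/q`, resp. `|V|/q²`, which gives `A² = r A + c J` for a constant `c` and
`J A = λ J`, where `λ = q^m r` and `J` is the all-ones matrix. Hence `A (A - r) (A - λ) = 0`: the
symmetric matrix `A` has its eigenvalues in `{λ, r, 0}`, and the traces of `A` and `A²` determine
their multiplicities.
-/

open Polynomial Finset Matrix

@[to_additive]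
theorem Fintype.prod_comp_eq_pow_mul_pow_mul_pow {ι α M : Type*} [Fintype ι] [DecidableEq α]
    [CommMonoid M] (g : α → M) (v : ι → α) {x y z : α}
    (hv : ∀ i, v i = x ∨ v i = y ∨ v i = z) :
    ∏ i, g (v i) = g x ^ #{i | v i = x} * g y ^ #{i | v i ≠ x ∧ v i ≠ z} *
      g z ^ #{i | v i ≠ x ∧ v i = z} := by
  rw [← prod_filter_mul_prod_filter_not univ (v · = x),
    ← prod_filter_mul_prod_filter_not (univ.filter (v · ≠ x)) (v · = z),
    filter_filter, filter_filter, mul_comm (∏ i ∈ _ with _ ∧ v i = z, _), ← mul_assoc]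
  congr 2 <;> refine prod_eq_pow_card fun i hi => ?_ <;> simp only [mem_filter] at hi
  · rw [hi.2]
  · have := hv i; tauto
  · rw [hi.2.2]

theorem prod_X_sub_C_eq_of_sum_eq_of_sum_sq_eq {ι : Type*} [Fintype ι] (v : ι → ℝ) {l r : ℝ}
    {k : ℕ} (hl : l ≠ 0) (hr : r ≠ 0) (hv : ∀ i, v i = l ∨ v i = r ∨ v i = 0)
    (hsum : ∑ i, v i = l + k * r) (hsum_sq : ∑ i, v i ^ 2 = l ^ 2 + k * r ^ 2) :
    ∏ i, (X - C (v i)) = (X - C l) * (X - C r) ^ k * X ^ (Fintype.card ι - k - 1) := by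
  have hcard := Fintype.sum_comp_eq_nsmul_add_nsmul_add_nsmul (fun _ => 1) v hv
  have h1 := Fintype.sum_comp_eq_nsmul_add_nsmul_add_nsmul id v hv
  have h2 := Fintype.sum_comp_eq_nsmul_add_nsmul_add_nsmul (· ^ 2) v hv
  have hb_of_eq : l = r → #{i | v i ≠ l ∧ v i ≠ 0} = 0 := fun hlr =>
    card_eq_zero.mpr <| filter_false_of_mem fun i _ => by have := hv i; subst hlr; tauto
  simp only [sum_const, card_univ, smul_eq_mul, mul_one, id, nsmul_eq_mul, hsum, hsum_sq,
    mul_zero, add_zero, ne_eq, zero_pow two_ne_zero] at hcard h1 h2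
  rw [Fintype.prod_comp_eq_pow_mul_pow_mul_pow (fun t => X - C t) v hv, map_zero, sub_zero]
  generalize #{i | v i = l} = a at *
  generalize #{i | v i ≠ l ∧ v i ≠ 0} = b at *
  generalize #{i | v i ≠ l ∧ v i = 0} = z at *
  have hkey : ((a : ℝ) - 1) * (l * (l - r)) = 0 := by linear_combination r * h1 - h2
  rcases mul_eq_zero.mp hkey with ha | hlr
  · have ha : a = 1 := by exact_mod_cast sub_eq_zero.mp ha
    subst ha
    have hb : (b : ℝ) = k := mul_right_cancel₀ hr (by push_cast at h1; linarith)
    replace hb : b = k := by exact_mod_cast hb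
    rw [hb, pow_one, show z = Fintype.card ι - k - 1 by omega]
  · have hlr : l = r := sub_eq_zero.mp ((mul_eq_zero.mp hlr).resolve_left hl)
    have hb := hb_of_eq hlr
    subst hlr hb
    have ha : (a : ℝ) = k + 1 := mul_right_cancel₀ hl (by push_cast at h1; linarith)
    replace ha : a = k + 1 := by exact_mod_cast ha
    rw [ha, show z = Fintype.card ι - k - 1 by omega, pow_zero, mul_one, pow_succ']

theorem Matrix.IsHermitian.trace_mul_self {n : Type*} [Fintype n] [DecidableEq n]
    {A : Matrix n n ℝ} (hA : A.IsHermitian) :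
    (A * A).trace = ∑ i, hA.eigenvalues i ^ 2 := by
  conv_lhs => rw [hA.spectral_theorem, ← map_mul, Unitary.conjStarAlgAut_apply,
    Matrix.trace_mul_cycle, Unitary.coe_star_mul_self, one_mul, Matrix.diagonal_mul_diagonal,
    Matrix.trace_diagonal]
  simp [sq]

theorem Matrix.IsHermitian.eigenvalues_eq_or_eq_or_eq_zero {n : Type*} [Fintype n]
    [DecidableEq n] {A : Matrix n n ℝ} (hA : A.IsHermitian) {l r : ℝ}
    (h : A * (A - r • 1) * (A - l • 1) = 0) (i : n) :
    hA.eigenvalues i = l ∨ hA.eigenvalues i = r ∨ hA.eigenvalues i = 0 := by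
  have : Nonempty n := ⟨i⟩
  have hp : aeval A (X * (X - C r) * (X - C l)) = 0 := by
    simpa [Algebra.algebraMap_eq_smul_one] using h
  have hroot := spectrum.subset_polynomial_aeval A (X * (X - C r) * (X - C l))
    ⟨_, hA.eigenvalues_mem_spectrum_real i, rfl⟩
  rw [hp, spectrum.zero_eq, Set.mem_singleton_iff] at hroot
  simp only [eval_mul, eval_X, eval_sub, eval_C, mul_eq_zero, sub_eq_zero] at hroot
  tauto

theorem Matrix.IsHermitian.charpoly_eq_of_cubic {n : Type*} [Fintype n] [DecidableEq n]
    {A : Matrix n n ℝ} (hA : A.IsHermitian) {l r : ℝ} {k : ℕ} (hl : l ≠ 0) (hr : r ≠ 0)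
    (hcubic : A * (A - r • 1) * (A - l • 1) = 0) (htrace : A.trace = l + k * r)
    (htrace_sq : (A * A).trace = l ^ 2 + k * r ^ 2) :
    A.charpoly = (X - C l) * (X - C r) ^ k * X ^ (Fintype.card n - k - 1) := by
  rw [hA.trace_eq_sum_eigenvalues] at htrace
  rw [hA.trace_mul_self] at htrace_sq
  rw [hA.charpoly_eq]
  simp only [RCLike.ofReal_real_eq_id, id] at htrace ⊢
  exact prod_X_sub_C_eq_of_sum_eq_of_sum_sq_eq _ hl hr
    (hA.eigenvalues_eq_or_eq_or_eq_zero hcubic) htrace htrace_sq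

section FiberMatrix

variable {ι K : Type*} [DecidableEq K]

def fiberMatrix (φ : ι → K) : Matrix ι ι ℝ := Matrix.of fun f f' => if φ f = φ f' then 1 else 0

theorem fiberMatrix_transpose (φ : ι → K) : (fiberMatrix φ)ᵀ = fiberMatrix φ := by
  ext f f'
  simp [fiberMatrix, eq_comm]

variable [Fintype ι]

theorem trace_fiberMatrix (φ : ι → K) : (fiberMatrix φ).trace = Fintype.card ι := by
  simp [fiberMatrix, Matrix.trace]

theorem fiberMatrix_mul_self {φ : ι → K} {r : ℝ} (hr : ∀ c, (#{g | φ g = c} : ℝ) = r) :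
    fiberMatrix φ * fiberMatrix φ = r • fiberMatrix φ := by
  ext f f'
  simp only [fiberMatrix, Matrix.mul_apply, Matrix.of_apply, Matrix.smul_apply, smul_eq_mul,
    mul_ite, mul_one, mul_zero, ← ite_and]
  by_cases h : φ f = φ f'
  · rw [if_pos h, ← hr (φ f), sum_boole]
    congr 3
    grind
  · rw [if_neg h]
    exact sum_eq_zero fun g _ => if_neg fun hg => h (hg.2.trans hg.1)

theorem fiberMatrix_mul_fiberMatrix {φ ψ : ι → K} {s : ℝ}
    (hs : ∀ c d, (#{g | φ g = c ∧ ψ g = d} : ℝ) = s) :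
    fiberMatrix φ * fiberMatrix ψ = s • Matrix.of fun _ _ => 1 := by
  ext f f'
  simp only [fiberMatrix, Matrix.mul_apply, Matrix.of_apply, Matrix.smul_apply, smul_eq_mul,
    mul_ite, mul_one, mul_zero, ← ite_and]
  rw [sum_boole, ← hs (φ f) (ψ f')]
  congr 3
  grind

theorem ones_mul_fiberMatrix {φ : ι → K} {r : ℝ} (hr : ∀ c, (#{g | φ g = c} : ℝ) = r) :
    (Matrix.of fun _ _ => 1) * fiberMatrix φ = r • Matrix.of fun _ _ => (1 : ℝ) := by
  ext f f'
  simp only [fiberMatrix, Matrix.mul_apply, Matrix.of_apply, Matrix.smul_apply, smul_eq_mul,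
    one_mul, mul_one]
  rw [sum_boole, ← hr (φ f')]

variable {P : Type*} [Fintype P] (e : P → ι → K)

theorem sum_fiberMatrix_mul_self [DecidableEq P] {r s : ℝ}
    (hr : ∀ a c, (#{g | e a g = c} : ℝ) = r)
    (hs : ∀ a b, a ≠ b → ∀ c d, (#{g | e a g = c ∧ e b g = d} : ℝ) = s) :
    (∑ a, fiberMatrix (e a)) * (∑ a, fiberMatrix (e a)) =
      r • ∑ a, fiberMatrix (e a) +
        ((Fintype.card P : ℝ) * (Fintype.card P - 1) * s) • Matrix.of fun _ _ => 1 := by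
  have hrow : ∀ a, ∑ b, fiberMatrix (e a) * fiberMatrix (e b) =
      r • fiberMatrix (e a) + (((Fintype.card P : ℝ) - 1) * s) • Matrix.of fun _ _ => 1 := by
    intro a
    rw [← add_sum_erase _ _ (mem_univ a), fiberMatrix_mul_self (hr a),
      sum_congr rfl fun b hb => fiberMatrix_mul_fiberMatrix (hs a b (ne_of_mem_erase hb).symm),
      sum_const, card_erase_of_mem (mem_univ a), card_univ, ← Nat.cast_smul_eq_nsmul ℝ,
      smul_smul, Nat.cast_pred (Fintype.card_pos_iff.mpr ⟨a⟩)]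
  rw [sum_mul_sum, sum_congr rfl fun a _ => hrow a, sum_add_distrib, sum_const, card_univ,
    ← smul_sum, ← Nat.cast_smul_eq_nsmul ℝ, smul_smul, mul_assoc]

theorem ones_mul_sum_fiberMatrix {r : ℝ} (hr : ∀ a c, (#{g | e a g = c} : ℝ) = r) :
    (Matrix.of fun _ _ => 1) * ∑ a, fiberMatrix (e a) =
      ((Fintype.card P : ℝ) * r) • Matrix.of fun _ _ => (1 : ℝ) := by
  rw [mul_sum, sum_congr rfl fun a _ => ones_mul_fiberMatrix (hr a), sum_const, card_univ,
    ← Nat.cast_smul_eq_nsmul ℝ, smul_smul]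

theorem trace_sum_fiberMatrix :
    (∑ a, fiberMatrix (e a)).trace = Fintype.card P * Fintype.card ι := by
  simp [trace_sum, trace_fiberMatrix]

theorem charpoly_sum_fiberMatrix [Fintype K] [DecidableEq ι] [DecidableEq P] [Nonempty P]
    [Nonempty ι] (h1 : ∀ a c, #{g | e a g = c} * Fintype.card K = Fintype.card ι)
    (h2 : ∀ a b, a ≠ b → ∀ c d,
      #{g | e a g = c ∧ e b g = d} * Fintype.card K ^ 2 = Fintype.card ι) :
    (∑ a, fiberMatrix (e a)).charpoly =
      (X - C (Fintype.card P * Fintype.card ι / Fintype.card K : ℝ)) *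
        (X - C (Fintype.card ι / Fintype.card K : ℝ)) ^ ((Fintype.card K - 1) * Fintype.card P) *
        X ^ (Fintype.card ι - (Fintype.card K - 1) * Fintype.card P - 1) := by
  have : Nonempty K := ⟨e (Classical.arbitrary P) (Classical.arbitrary ι)⟩
  have hq : (0 : ℝ) < Fintype.card K := by exact_mod_cast Fintype.card_pos
  have hr : ∀ a c, (#{g | e a g = c} : ℝ) = Fintype.card ι / Fintype.card K := fun a c =>
    eq_div_of_mul_eq hq.ne' (by exact_mod_cast h1 a c)
  have hs : ∀ a b, a ≠ b → ∀ c d,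
      (#{g | e a g = c ∧ e b g = d} : ℝ) = Fintype.card ι / Fintype.card K ^ 2 :=
    fun a b hab c d => eq_div_of_mul_eq (by positivity) (by exact_mod_cast h2 a b hab c d)
  have hsq := sum_fiberMatrix_mul_self e hr hs
  have hJA := ones_mul_sum_fiberMatrix e hr
  set A := ∑ a, fiberMatrix (e a)
  have hcubic : A * (A - (Fintype.card ι / Fintype.card K : ℝ) • 1) *
      (A - (Fintype.card P * Fintype.card ι / Fintype.card K : ℝ) • 1) = 0 := by
    have hquad : A * (A - (Fintype.card ι / Fintype.card K : ℝ) • 1) =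
        ((Fintype.card P : ℝ) * (Fintype.card P - 1) * (Fintype.card ι / Fintype.card K ^ 2)) •
          Matrix.of fun _ _ => 1 := by
      rw [Matrix.mul_sub, mul_smul_comm, mul_one, hsq, add_sub_cancel_left]
    rw [hquad, smul_mul_assoc, Matrix.mul_sub, hJA, mul_smul_comm, mul_one, mul_div_assoc,
      sub_self, smul_zero]
  have hA : A.IsHermitian := by
    simp [A, Matrix.IsHermitian, conjTranspose_eq_transpose_of_trivial, transpose_sum,
      fiberMatrix_transpose]
  have hK : 1 ≤ Fintype.card K := Fintype.card_pos
  refine hA.charpoly_eq_of_cubic (by positivity) (by positivity) hcubic ?_ ?_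
  · rw [trace_sum_fiberMatrix]
    push_cast [hK]
    field_simp
    ring
  · rw [hsq, trace_add, trace_smul, trace_smul, trace_sum_fiberMatrix]
    simp only [Matrix.trace, diag_apply, of_apply, sum_const, card_univ, nsmul_eq_mul, mul_one,
      smul_eq_mul]
    push_cast [hK]
    field_simp
    ring

end FiberMatrix

theorem AddMonoidHom.card_filter_eq_mul_card {G H : Type*} [AddGroup G] [AddGroup H]
    [Fintype G] [Fintype H] [DecidableEq H] (φ : G →+ H) (hφ : Function.Surjective φ) (y : H) :
    #{x | φ x = y} * Fintype.card H = Fintype.card G := by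
  have hfiber : ∀ y', #{x | φ x = y'} = #{x | φ x = y} := by
    intro y'
    obtain ⟨d, hd⟩ := hφ (-y' + y)
    refine Finset.card_equiv (Equiv.addRight d) fun x => ?_
    simp [hd, ← add_assoc, add_neg_eq_zero]
  rw [← card_univ (α := G), card_eq_sum_card_fiberwise (s := univ) (t := univ) (f := φ)
    fun x _ => mem_univ _, sum_congr rfl fun y' _ => hfiber y', sum_const, card_univ, smul_eq_mul,
    mul_comm]

theorem FiniteField.pow_injective_of_coprime {F : Type*} [Field F] [Fintype F] {k : ℕ}
    (hk : k ≠ 0) (hcop : k.Coprime (Fintype.card F - 1)) :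
    Function.Injective fun x : F => x ^ k := by
  classical
  intro x y hxy
  simp only at hxy
  rcases eq_or_ne x 0 with rfl | hx
  · rw [zero_pow hk, eq_comm, pow_eq_zero_iff hk] at hxy
    exact hxy.symm
  rcases eq_or_ne y 0 with rfl | hy
  · rwa [zero_pow hk, pow_eq_zero_iff hk] at hxy
  have hunits : (Nat.card Fˣ).Coprime k := by
    rw [Nat.card_eq_fintype_card, Fintype.card_units]
    exact hcop.symm
  have := (hunits.pow_left_bijective).injective (a₁ := Units.mk0 x hx) (a₂ := Units.mk0 y hy)
    (Units.ext (by simpa using hxy))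
  simpa using congrArg Units.val this

theorem card_filter_eval_eq_mul_card {σ F : Type*} [Field F] [Fintype F] [DecidableEq F]
    {V : Submodule F (MvPolynomial σ F)} [Fintype V] (h1 : (1 : MvPolynomial σ F) ∈ V)
    (a : σ → F) (c : F) :
    #{g : V | MvPolynomial.eval a (g : MvPolynomial σ F) = c} * Fintype.card F =
      Fintype.card V := by
  have hsurj : Function.Surjective ((MvPolynomial.aeval a).toLinearMap ∘ₗ V.subtype) :=
    fun c => ⟨c • ⟨1, h1⟩, by simp⟩
  convert (((MvPolynomial.aeval a).toLinearMap ∘ₗ V.subtype).toAddMonoidHom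
    |>.card_filter_eq_mul_card hsurj c) using 3
  ext g
  rw [Finset.mem_filter, Finset.mem_filter]
  simp

theorem card_filter_eval_eq_and_eval_eq_mul_card {σ F : Type*} [Field F] [Fintype F]
    [DecidableEq F] {V : Submodule F (MvPolynomial σ F)} [Fintype V]
    (h1 : (1 : MvPolynomial σ F) ∈ V) {a b : σ → F} {g₀ : MvPolynomial σ F} (hg₀ : g₀ ∈ V)
    (hne : MvPolynomial.eval a g₀ ≠ MvPolynomial.eval b g₀) (c d : F) :
    #{g : V | MvPolynomial.eval a (g : MvPolynomial σ F) = c ∧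
      MvPolynomial.eval b (g : MvPolynomial σ F) = d} * Fintype.card F ^ 2 =
      Fintype.card V := by
  set φ := ((MvPolynomial.aeval a).toLinearMap.prod (MvPolynomial.aeval b).toLinearMap) ∘ₗ
    V.subtype
  have hsurj : Function.Surjective φ := by
    rintro ⟨s, t⟩
    have hne' : MvPolynomial.eval b g₀ - MvPolynomial.eval a g₀ ≠ 0 := sub_ne_zero.mpr hne.symm
    set β := (t - s) / (MvPolynomial.eval b g₀ - MvPolynomial.eval a g₀)
    refine ⟨(s - β * MvPolynomial.eval a g₀) • ⟨1, h1⟩ + β • ⟨g₀, hg₀⟩, Prod.ext ?_ ?_⟩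
    · simp [φ]
    · simp [φ, β]
      field_simp
      ring
  convert φ.toAddMonoidHom.card_filter_eq_mul_card hsurj (c, d) using 3
  · simp [φ]
  · simp [sq]

theorem exists_mem_eval_ne_of_monomial_mem {σ F : Type*} [Field F] [Fintype F]
    {V : Submodule F (MvPolynomial σ F)}
    (hpure : ∀ j : σ, ∃ k : ℕ, 0 < k ∧ Nat.gcd k (Fintype.card F - 1) = 1 ∧
      MvPolynomial.monomial (Finsupp.single j k) (1 : F) ∈ V)
    {a b : σ → F} (hab : a ≠ b) :
    ∃ g ∈ V, MvPolynomial.eval a g ≠ MvPolynomial.eval b g := by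
  obtain ⟨j, hj⟩ := Function.ne_iff.mp hab
  obtain ⟨k, hk, hcop, hmem⟩ := hpure j
  refine ⟨_, hmem, ?_⟩
  simpa [MvPolynomial.eval_monomial] using
    fun h => hj (FiniteField.pow_injective_of_coprime hk.ne' hcop h)

theorem of_card_eval_sub_eq_zero_eq_sum_fiberMatrix {σ F : Type*} [Fintype σ] [DecidableEq σ]
    [Field F] [Fintype F] [DecidableEq F] (V : Submodule F (MvPolynomial σ F)) :
    (Matrix.of fun f f' : V => (#{a : σ → F | MvPolynomial.eval a
      ((f : MvPolynomial σ F) - (f' : MvPolynomial σ F)) = 0} : ℝ)) =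
      ∑ a, fiberMatrix fun g : V => MvPolynomial.eval a (g : MvPolynomial σ F) := by
  ext f f'
  simp [fiberMatrix, Matrix.sum_apply, sub_eq_zero]

/-- Spectrum of the polynomial incidence graph: for a subspace `V` of `𝔽_q[x₁,…,x_m]` with
property (*), the symmetric matrix `A (f, f') = N_q (f − f')` has eigenvalues
`q^(dim V + m − 1)`, `q^(dim V − 1)` and `0`, with multiplicities `1`, `(q−1)·q^m`, and
`|V| − (q−1)·q^m − 1`, expressed via its characteristic polynomial. -/
theorem stmt10 {m : ℕ} {F : Type} [Field F] [Fintype F] [DecidableEq F]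
    (V : Submodule F (MvPolynomial (Fin m) F)) (I : Finset (Fin m →₀ ℕ))
    (hV : V = Submodule.span F ((fun d => MvPolynomial.monomial d (1 : F)) '' I))
    (h0 : (0 : Fin m →₀ ℕ) ∈ I)
    (hpure : ∀ j : Fin m, ∃ k : ℕ, 0 < k ∧ Nat.gcd k (Fintype.card F - 1) = 1 ∧
      Finsupp.single j k ∈ I)
    [Fintype V] [DecidableEq V] :
    (Matrix.of fun f f' : V =>
        ((Finset.univ.filter fun a : Fin m → F =>
          MvPolynomial.eval a ((f : MvPolynomial (Fin m) F) - (f' : MvPolynomial (Fin m) F))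
            = 0).card : ℝ)).charpoly =
      (Polynomial.X - Polynomial.C
          ((Fintype.card F : ℝ) ^ (Module.finrank F V + m - 1))) *
        (Polynomial.X - Polynomial.C
          ((Fintype.card F : ℝ) ^ (Module.finrank F V - 1))) ^
            ((Fintype.card F - 1) * Fintype.card F ^ m) *
        Polynomial.X ^
          (Fintype.card V - (Fintype.card F - 1) * Fintype.card F ^ m - 1) := by
  have hmem : ∀ d ∈ I, MvPolynomial.monomial d (1 : F) ∈ V := fun d hd =>
    hV ▸ Submodule.subset_span ⟨d, hd, rfl⟩
  have h1 : (1 : MvPolynomial (Fin m) F) ∈ V := by simpa using hmem 0 h0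
  have hsep : ∀ a b : Fin m → F, a ≠ b →
      ∃ g ∈ V, MvPolynomial.eval a g ≠ MvPolynomial.eval b g :=
    fun a b => exists_mem_eval_ne_of_monomial_mem fun j =>
      (hpure j).imp fun k ⟨hk, hcop, hkI⟩ => ⟨hk, hcop, hmem _ hkI⟩
  obtain ⟨n, hn⟩ : ∃ n, Module.finrank F V = n + 1 :=
    Nat.exists_eq_add_one.mpr (Module.finrank_pos_iff_exists_ne_zero.mpr ⟨⟨1, h1⟩, by simp⟩)
  rw [of_card_eval_sub_eq_zero_eq_sum_fiberMatrix, charpoly_sum_fiberMatrix _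
    (fun a c => card_filter_eval_eq_mul_card h1 a c) fun a b hab s t => ?_]
  · have hq : (Fintype.card F : ℝ) ≠ 0 := by positivity
    rw [Module.card_eq_pow_finrank (K := F) (V := V), Fintype.card_fun, Fintype.card_fin, hn,
      Nat.add_sub_cancel, show n + 1 + m - 1 = n + m by omega]
    have hl : (Fintype.card F : ℝ) ^ m * Fintype.card F ^ (n + 1) / Fintype.card F =
        Fintype.card F ^ (n + m) := by
      field_simp
      ring
    have hr : (Fintype.card F : ℝ) ^ (n + 1) / Fintype.card F = Fintype.card F ^ n := by
      field_simp
      ring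
    push_cast
    rw [hl, hr]
  · obtain ⟨g₀, hg₀, hne⟩ := hsep a b hab
    exact card_filter_eval_eq_and_eval_eq_mul_card h1 hg₀ hne s t
end

section
/- Let V be a subspace of 𝔽_q[x₁,…,x_m] with property (*). Then for every L ⊆ V, q^(m−1)·|L|² ≤ Σ_{f,f'∈L} N_q(f − f') ≤ q^(m−1)·|L|² + q^(dim V − 1)·|L|, where N_q(g) = |{α ∈ 𝔽_q^m : g(α) = 0}|. -/
/-!
Fix a nontrivial additive character `ψ : 𝔽_q → ℂ`. By orthogonality, for any map `g` into `𝔽_q`,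
`q · #{(f, f') | g f = g f'} = ∑_c |∑_f ψ (c · g f)|²`, and the `c = 0` term is `|L|²`.
Applied to the evaluation functionals `ev_a` on `V` and summed over `a ∈ 𝔽_q^m` this gives
`q ∑ N_q(f - f') = q^m |L|² + ∑_{c ≠ 0, a} |∑_f ψ ((c • ev_a) f)|²`.
The error term is nonnegative, which is the lower bound. Property (*) makes the functionals
`c • ev_a` with `c ≠ 0` pairwise distinct (`1 ∈ V` recovers `c`, and `x_j ^ k_j` recovers `a_j`
since `x ↦ x ^ k_j` is a bijection of `𝔽_q`), so the error term is at most the sum over all of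
`V*`, which equals `q^(dim V) |L|` by Parseval.
-/

open Finset

def collisionCount {ι β : Type*} [DecidableEq β] (s : Finset ι) (g : ι → β) : ℕ :=
  #{p ∈ s ×ˢ s | g p.1 = g p.2}

lemma sum_sum_card_filter_eq_sum_collisionCount {ι X β : Type*} [Fintype X] [DecidableEq β]
    (s : Finset ι) (g : X → ι → β) :
    ∑ i ∈ s, ∑ j ∈ s, #{x | g x i = g x j} = ∑ x, collisionCount s (g x) := by
  simp only [collisionCount, card_filter]
  rw [← sum_product', sum_comm]

lemma pow_left_injective_of_coprime_card_sub_one {F : Type*} [Field F] [Fintype F] {k : ℕ}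
    (hk : 0 < k) (hcop : k.Coprime (Fintype.card F - 1)) :
    Function.Injective fun x : F ↦ x ^ k := by
  intro a b hab
  simp only at hab
  rcases eq_or_ne a 0 with rfl | ha
  · rw [zero_pow hk.ne', eq_comm, pow_eq_zero_iff hk.ne'] at hab
    exact hab.symm
  rcases eq_or_ne b 0 with rfl | hb
  · rwa [zero_pow hk.ne', pow_eq_zero_iff hk.ne'] at hab
  have hunits : (Nat.card Fˣ).Coprime k := by
    rwa [Nat.card_units, Nat.card_eq_fintype_card, Nat.coprime_comm]
  have := hunits.pow_left_bijective.injective (a₁ := Units.mk0 a ha) (a₂ := Units.mk0 b hb)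
    (Units.ext (by simpa using hab))
  simpa using congrArg Units.val this

lemma exists_addChar_ne_one (F : Type*) [Field F] [Finite F] : ∃ ψ : AddChar F ℂ, ψ ≠ 1 :=
  ⟨_, by simpa using AddChar.FiniteField.primitiveChar_to_Complex_isPrimitive F one_ne_zero⟩

namespace AddChar

lemma normSq_sum_apply {G ι : Type*} [AddCommGroup G] [Finite G] (ψ : AddChar G ℂ)
    (s : Finset ι) (x : ι → G) :
    (Complex.normSq (∑ i ∈ s, ψ (x i)) : ℂ) = ∑ i ∈ s, ∑ j ∈ s, ψ (x i - x j) := by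
  rw [← Complex.mul_conj, map_sum, sum_mul_sum]
  simp_rw [← map_neg_eq_conj, ← map_add_eq_mul, sub_eq_add_neg]

variable {F : Type*} [Field F] {ψ : AddChar F ℂ}

section Dual

variable {W : Type*} [AddCommGroup W] [Module F W] [Fintype (Module.Dual F W)]

lemma sum_dual_apply [DecidableEq W] (hψ : ψ ≠ 1) (v : W) :
    ∑ ℓ : Module.Dual F W, ψ (ℓ v) =
      if v = 0 then (Fintype.card (Module.Dual F W) : ℂ) else 0 := by
  split_ifs with hv
  · simp [hv]
  have heval : Function.Surjective (Module.Dual.eval F W v) := by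
    refine LinearMap.surjective_of_ne_zero fun h ↦ hv ?_
    exact (Module.forall_dual_apply_eq_zero_iff F v).mp (LinearMap.congr_fun h)
  refine sum_eq_zero_of_ne_one
    (ψ := ψ.compAddMonoidHom (Module.Dual.eval F W v).toAddMonoidHom) ?_
  obtain ⟨t, ht⟩ := ne_one_iff.mp hψ
  obtain ⟨ℓ, rfl⟩ := heval t
  exact ne_one_iff.mpr ⟨ℓ, ht⟩

lemma sum_normSq_sum_dual_apply [Finite F] (hψ : ψ ≠ 1) (s : Finset W) :
    ∑ ℓ : Module.Dual F W, Complex.normSq (∑ v ∈ s, ψ (ℓ v)) =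
      Fintype.card (Module.Dual F W) * #s := by
  classical
  apply Complex.ofReal_injective
  push_cast
  simp_rw [normSq_sum_apply, ← map_sub]
  rw [sum_comm]
  simp_rw [sum_comm (s := univ), sum_dual_apply hψ, sub_eq_zero, sum_ite_eq]
  simp [mul_comm]

end Dual

variable [Fintype F] [DecidableEq F]

lemma sum_normSq_sum_mul_apply {ι : Type*} (hψ : ψ ≠ 1) (s : Finset ι) (g : ι → F) :
    ∑ c : F, Complex.normSq (∑ i ∈ s, ψ (c * g i)) = Fintype.card F * collisionCount s g := by
  apply Complex.ofReal_injective
  push_cast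
  simp_rw [normSq_sum_apply, ← mul_sub]
  rw [sum_comm]
  simp_rw [sum_comm (s := univ), sum_mulShift _ (IsPrimitive.of_ne_one hψ), sub_eq_zero]
  rw [collisionCount, card_filter, sum_product]
  push_cast
  simp_rw [mul_sum, mul_boole]

lemma card_mul_collisionCount_eq {ι : Type*} (hψ : ψ ≠ 1) (s : Finset ι) (g : ι → F) :
    (Fintype.card F * collisionCount s g : ℝ) =
      #s ^ 2 + ∑ c ∈ univ.erase (0 : F), Complex.normSq (∑ i ∈ s, ψ (c * g i)) := by
  rw [← sum_normSq_sum_mul_apply hψ, ← add_sum_erase _ _ (mem_univ 0)]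
  simp only [zero_mul, map_zero_eq_one, sum_const, nsmul_eq_mul, mul_one, Complex.normSq_natCast]
  ring

end AddChar

section CollisionBounds

variable {F : Type*} [Field F] [Fintype F] [DecidableEq F]

lemma sq_card_le_card_mul_collisionCount {ι : Type*} (s : Finset ι) (g : ι → F) :
    #s ^ 2 ≤ Fintype.card F * collisionCount s g := by
  obtain ⟨ψ, hψ⟩ := exists_addChar_ne_one F
  have : 0 ≤ ∑ c ∈ univ.erase (0 : F), Complex.normSq (∑ i ∈ s, ψ (c * g i)) :=
    sum_nonneg fun _ _ ↦ Complex.normSq_nonneg _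
  have h := AddChar.card_mul_collisionCount_eq hψ s g
  exact_mod_cast (le_add_of_nonneg_right this).trans h.ge

lemma card_mul_sq_card_le_card_mul_sum_collisionCount {ι X : Type*} [Fintype X] (s : Finset ι)
    (φ : X → ι → F) : Fintype.card X * #s ^ 2 ≤ Fintype.card F * ∑ x, collisionCount s (φ x) := by
  rw [mul_sum, ← smul_eq_mul, ← card_univ, ← sum_const]
  exact sum_le_sum fun x _ ↦ sq_card_le_card_mul_collisionCount s (φ x)

lemma card_mul_sum_collisionCount_le {W X : Type*} [AddCommGroup W] [Module F W]
    [Fintype (Module.Dual F W)] [Fintype X] (s : Finset W) (φ : X → Module.Dual F W)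
    (hφ : Set.InjOn (fun p : F × X ↦ p.1 • φ p.2) {p | p.1 ≠ 0}) :
    Fintype.card F * ∑ x, collisionCount s (φ x) ≤
      Fintype.card X * #s ^ 2 + Fintype.card (Module.Dual F W) * #s := by
  classical
  obtain ⟨ψ, hψ⟩ := exists_addChar_ne_one F
  set T : Module.Dual F W → ℝ := fun ℓ ↦ Complex.normSq (∑ v ∈ s, ψ (ℓ v))
  have hbessel : ∑ x, ∑ c ∈ univ.erase (0 : F), T (c • φ x) ≤ Fintype.card (Module.Dual F W) * #s :=
    calc ∑ x, ∑ c ∈ univ.erase (0 : F), T (c • φ x)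
        = ∑ p ∈ univ.erase (0 : F) ×ˢ univ, T (p.1 • φ p.2) := by rw [sum_product, sum_comm]
      _ = ∑ ℓ ∈ (univ.erase (0 : F) ×ˢ univ).image fun p : F × X ↦ p.1 • φ p.2, T ℓ :=
          (sum_image (hφ.mono fun p hp ↦ (mem_erase.mp (mem_product.mp hp).1).1)).symm
      _ ≤ ∑ ℓ, T ℓ := sum_le_sum_of_subset_of_nonneg (subset_univ _) fun _ _ _ ↦
          Complex.normSq_nonneg _
      _ = _ := AddChar.sum_normSq_sum_dual_apply hψ s
  have hsplit : (Fintype.card F * ∑ x, collisionCount s (φ x) : ℝ) =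
      Fintype.card X * #s ^ 2 + ∑ x, ∑ c ∈ univ.erase (0 : F), T (c • φ x) := by
    push_cast
    simp_rw [mul_sum, AddChar.card_mul_collisionCount_eq hψ, sum_add_distrib, sum_const,
      card_univ, nsmul_eq_mul]
    rfl
  have : (Fintype.card F * ∑ x, collisionCount s (φ x) : ℝ) ≤
      Fintype.card X * #s ^ 2 + Fintype.card (Module.Dual F W) * #s := by
    rw [hsplit]
    gcongr
  exact_mod_cast this

end CollisionBounds

namespace MvPolynomial

variable {σ F : Type*} [Field F]

noncomputable def pointEval (V : Submodule F (MvPolynomial σ F)) (a : σ → F) : Module.Dual F V :=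
  (aeval a).toLinearMap.domRestrict V

@[simp]
lemma pointEval_apply (V : Submodule F (MvPolynomial σ F)) (a : σ → F) (f : V) :
    pointEval V a f = eval a f := by
  simp [pointEval]

lemma injOn_smul_pointEval [Fintype F] {V : Submodule F (MvPolynomial σ F)} (h1 : 1 ∈ V)
    (hX : ∀ j, ∃ k, 0 < k ∧ k.Coprime (Fintype.card F - 1) ∧ X j ^ k ∈ V) :
    Set.InjOn (fun p : F × (σ → F) ↦ p.1 • pointEval V p.2) {p | p.1 ≠ 0} := by
  rintro ⟨c, a⟩ hc ⟨c', a'⟩ - h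
  have hcc : c = c' := by simpa using LinearMap.congr_fun h ⟨1, h1⟩
  subst hcc
  suffices a = a' by rw [this]
  funext j
  obtain ⟨k, hk, hcop, hXk⟩ := hX j
  have := LinearMap.congr_fun h ⟨_, hXk⟩
  simp only [LinearMap.smul_apply, pointEval_apply, smul_eq_mul, map_pow, eval_X] at this
  exact pow_left_injective_of_coprime_card_sub_one hk hcop (mul_left_cancel₀ hc this)

lemma sum_sum_card_eval_sub_eq_zero [Fintype σ] [DecidableEq σ] [Fintype F] [DecidableEq F]
    {V : Submodule F (MvPolynomial σ F)} [DecidablePred (· ∈ V)] {L : Finset (MvPolynomial σ F)}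
    (hL : ∀ f ∈ L, f ∈ V) :
    ∑ f ∈ L, ∑ f' ∈ L, #{a | eval a (f - f') = 0} =
      ∑ a, collisionCount (L.subtype (· ∈ V)) (pointEval V a) := by
  rw [← sum_sum_card_filter_eq_sum_collisionCount, ← sum_subtype_of_mem (p := (· ∈ V)) _ hL]
  refine sum_congr rfl fun v _ ↦ ?_
  rw [← sum_subtype_of_mem (p := (· ∈ V)) _ hL]
  simp [sub_eq_zero]

end MvPolynomial

/-- Two-sided incidence bound for a set of multivariate polynomials from a subspace `V` with
property (*): `q^(m−1)|L|² ≤ Σ_{f,f'∈L} N_q(f−f') ≤ q^(m−1)|L|² + q^(dim V −1)|L|`. -/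
theorem stmt13 {m : ℕ} {F : Type} [Field F] [Fintype F] [DecidableEq F] (hm : 0 < m)
    (V : Submodule F (MvPolynomial (Fin m) F)) (I : Finset (Fin m →₀ ℕ))
    (hV : V = Submodule.span F ((fun d => MvPolynomial.monomial d (1 : F)) '' I))
    (h0 : (0 : Fin m →₀ ℕ) ∈ I)
    (hpure : ∀ j : Fin m, ∃ k : ℕ, 0 < k ∧ Nat.gcd k (Fintype.card F - 1) = 1 ∧
      Finsupp.single j k ∈ I)
    (L : Finset (MvPolynomial (Fin m) F)) (hL : ∀ f ∈ L, f ∈ V) :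
    Fintype.card F ^ (m - 1) * L.card ^ 2 ≤
      (∑ f ∈ L, ∑ f' ∈ L, (Finset.univ.filter fun a : Fin m → F =>
        MvPolynomial.eval a (f - f') = 0).card) ∧
    (∑ f ∈ L, ∑ f' ∈ L, (Finset.univ.filter fun a : Fin m → F =>
        MvPolynomial.eval a (f - f') = 0).card) ≤
      Fintype.card F ^ (m - 1) * L.card ^ 2 +
        Fintype.card F ^ (Module.finrank F V - 1) * L.card := by
  classical
  have hmono : ∀ d ∈ I, MvPolynomial.monomial d (1 : F) ∈ V := fun d hd ↦
    hV ▸ Submodule.subset_span ⟨d, hd, rfl⟩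
  have h1 : (1 : MvPolynomial (Fin m) F) ∈ V := hmono 0 h0
  have hX (j : Fin m) : ∃ k, 0 < k ∧ k.Coprime (Fintype.card F - 1) ∧ MvPolynomial.X j ^ k ∈ V :=
    let ⟨k, hk, hcop, hkI⟩ := hpure j
    ⟨k, hk, hcop, by rw [MvPolynomial.X_pow_eq_monomial]; exact hmono _ hkI⟩
  have : FiniteDimensional F V := hV ▸ FiniteDimensional.span_of_finite F (I.finite_toSet.image _)
  have : Finite (Module.Dual F V) := Module.finite_of_finite F
  have : Fintype (Module.Dual F V) := Fintype.ofFinite _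
  rw [MvPolynomial.sum_sum_card_eval_sub_eq_zero hL]
  set L' := L.subtype (· ∈ V)
  have hcard : #L' = #L := by rw [card_subtype, filter_true_of_mem hL]
  have hdual : Fintype.card (Module.Dual F V) = Fintype.card F ^ Module.finrank F V := by
    rw [Module.card_eq_pow_finrank (K := F) (V := Module.Dual F V), Subspace.dual_finrank_eq]
  have hd : Module.finrank F V ≠ 0 :=
    Module.finrank_pos_iff_exists_ne_zero.mpr ⟨⟨1, h1⟩, by simp⟩ |>.ne'
  have hlow := card_mul_sq_card_le_card_mul_sum_collisionCount L'
    fun a ↦ ⇑(MvPolynomial.pointEval V a)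
  have hup := card_mul_sum_collisionCount_le L' (MvPolynomial.pointEval V)
    (MvPolynomial.injOn_smul_pointEval h1 hX)
  rw [Fintype.card_fun, Fintype.card_fin, hcard] at hlow
  rw [Fintype.card_fun, Fintype.card_fin, hdual, hcard] at hup
  have hq : 0 < Fintype.card F := Fintype.card_pos
  refine ⟨Nat.le_of_mul_le_mul_left ?_ hq, Nat.le_of_mul_le_mul_left ?_ hq⟩
  · rwa [← mul_assoc, mul_pow_sub_one hm.ne']
  · rwa [mul_add, ← mul_assoc, ← mul_assoc, mul_pow_sub_one hm.ne', mul_pow_sub_one hd]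
end

section
/- For any finite set L of polynomials in m variables over 𝔽_q, Σ_{f,f'∈L} N_q(f − f') ≥ q^(m−1)·|L|², where N_q(g) = |{α ∈ 𝔽_q^m : g(α)=0}|. -/
/-- Cauchy–Schwarz in ℕ. -/
lemma nat_sq_sum_le_card_mul_sum_sq {ι : Type*} (s : Finset ι) (f : ι → ℕ) :
    (∑ i ∈ s, f i) ^ 2 ≤ s.card * ∑ i ∈ s, f i ^ 2 := by
  have := sq_sum_le_card_mul_sum_sq (α := ℚ) (s := s) (f := fun i => (f i : ℚ))
  exact_mod_cast this

/-- Lower bound for polynomial incidences: for any finite set `L` of `m`-variate polynomials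
over `𝔽_q`, `Σ_{f,f'∈L} N_q(f−f') ≥ q^(m−1)·|L|²`. -/
theorem stmt14 {m : ℕ} {F : Type} [Field F] [Fintype F] [DecidableEq F] (hm : 0 < m)
    (L : Finset (MvPolynomial (Fin m) F)) :
    Fintype.card F ^ (m - 1) * L.card ^ 2 ≤
      ∑ f ∈ L, ∑ f' ∈ L, (Finset.univ.filter fun a : Fin m → F =>
        MvPolynomial.eval a (f - f') = 0).card := by
  classical
  set q := Fintype.card F with hqdef
  have hq : 0 < q := Fintype.card_pos
  -- fiber counts
  set n : (Fin m → F) → F → ℕ :=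
    fun a β => (L.filter fun f => MvPolynomial.eval a f = β).card with hn
  have hsum : ∀ a, ∑ β : F, n a β = L.card := by
    intro a
    exact (Finset.card_eq_sum_card_fiberwise
      (fun f _ => Finset.mem_univ (MvPolynomial.eval a f))).symm
  -- rewrite RHS
  have hR : ∑ f ∈ L, ∑ f' ∈ L, (Finset.univ.filter fun a : Fin m → F =>
        MvPolynomial.eval a (f - f') = 0).card
      = ∑ a : Fin m → F, ∑ β : F, (n a β) ^ 2 := by
    have h1 : ∀ f f' : MvPolynomial (Fin m) F,
        (Finset.univ.filter fun a : Fin m → F =>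
          MvPolynomial.eval a (f - f') = 0).card
        = ∑ a : Fin m → F, if MvPolynomial.eval a f = MvPolynomial.eval a f' then 1 else 0 := by
      intro f f'
      rw [Finset.card_filter]
      refine Finset.sum_congr rfl fun a _ => ?_
      simp [map_sub, sub_eq_zero]
    calc ∑ f ∈ L, ∑ f' ∈ L, (Finset.univ.filter fun a : Fin m → F =>
            MvPolynomial.eval a (f - f') = 0).card
        = ∑ f ∈ L, ∑ f' ∈ L, ∑ a : Fin m → F,
            if MvPolynomial.eval a f = MvPolynomial.eval a f' then 1 else 0 := by
          simp_rw [h1]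
      _ = ∑ f ∈ L, ∑ a : Fin m → F, ∑ f' ∈ L,
            if MvPolynomial.eval a f = MvPolynomial.eval a f' then 1 else 0 := by
          exact Finset.sum_congr rfl fun f _ => Finset.sum_comm
      _ = ∑ a : Fin m → F, ∑ f ∈ L, ∑ f' ∈ L,
            if MvPolynomial.eval a f = MvPolynomial.eval a f' then 1 else 0 :=
          Finset.sum_comm
      _ = ∑ a : Fin m → F, ∑ β : F, (n a β) ^ 2 := by
          refine Finset.sum_congr rfl fun a _ => ?_
          have h2 : ∀ f ∈ L, MvPolynomial.eval a f ∈ (Finset.univ : Finset F) :=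
            fun f _ => Finset.mem_univ _
          rw [← Finset.sum_fiberwise_of_maps_to h2
            (fun f => ∑ f' ∈ L, if MvPolynomial.eval a f = MvPolynomial.eval a f' then 1 else 0)]
          refine Finset.sum_congr rfl fun β _ => ?_
          have hconst : ∀ f ∈ L.filter (fun f => MvPolynomial.eval a f = β),
              (∑ f' ∈ L, if MvPolynomial.eval a f = MvPolynomial.eval a f' then 1 else 0)
                = n a β := by
            intro f hf
            rw [Finset.mem_filter] at hf
            show _ = (L.filter fun g => MvPolynomial.eval a g = β).card
            rw [Finset.card_filter]
            exact Finset.sum_congr rfl fun f' _ => by rw [hf.2]; simp [eq_comm]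
          rw [Finset.sum_congr rfl hconst, Finset.sum_const, smul_eq_mul, sq]
  rw [hR]
  -- Cauchy-Schwarz per point
  have key : ∀ a : Fin m → F, L.card ^ 2 ≤ q * ∑ β : F, (n a β) ^ 2 := by
    intro a
    calc L.card ^ 2 = (∑ β : F, n a β) ^ 2 := by rw [hsum]
      _ ≤ q * ∑ β : F, (n a β) ^ 2 := by
          simpa using nat_sq_sum_le_card_mul_sum_sq Finset.univ (n a)
  have htot : q ^ m * L.card ^ 2 ≤ q * ∑ a : Fin m → F, ∑ β : F, (n a β) ^ 2 := by
    calc q ^ m * L.card ^ 2 = ∑ _a : Fin m → F, L.card ^ 2 := by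
          simp [Fintype.card_fun, hqdef]
      _ ≤ ∑ a : Fin m → F, q * ∑ β : F, (n a β) ^ 2 := Finset.sum_le_sum fun a _ => key a
      _ = q * ∑ a : Fin m → F, ∑ β : F, (n a β) ^ 2 := by rw [Finset.mul_sum]
  have hqm : q ^ m = q * q ^ (m - 1) := by
    rcases Nat.exists_eq_succ_of_ne_zero hm.ne' with ⟨k, rfl⟩
    simp [pow_succ, mul_comm]
  rw [hqm, mul_assoc] at htot
  exact le_of_mul_le_mul_left htot hq
end

section
/- Let V be a subspace of 𝔽_q[x₁,…,x_m] with property (*). Then for every set of points P ⊆ 𝔽_q^(m+1) and every set of polynomials L ⊆ V, letting I(P,L) = |{(v,f) ∈ P×L : f(v₁,…,v_m) = v_{m+1}}|, we have |I(P,L) − |P|·|L|/q| ≤ q^((dim V − 1)/2)·√(|P|·|L|). -/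
/-!
Read `v = (x, y) ∈ 𝔽_q^(m+1)` as lying on the graph of `f` when `f(x) = y`. Since `1 ∈ V`,
evaluation at `x` maps `V` onto `𝔽_q`, so every point lies on exactly `|V|/q` graphs. Two distinct
points with the same `x` lie on no common graph. If their bases `x ≠ x'` differ in coordinate `j`,
the pure power `x_j^k ∈ V` separates them, because `t ↦ t^k` is injective on `𝔽_q` when
`gcd(k, q - 1) = 1`; so evaluation at `x` and `x'` maps `V` onto `𝔽_q²`, and the two points share
exactly `|V|/q²` graphs.
A second-moment count then shows that the number `e(f)` of points of `P` on the graph of `f`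
satisfies `∑_{f ∈ V} (e(f) - |P|/q)² ≤ |P||V|/q`, and Cauchy–Schwarz over `L` gives the bound,
as `|V|/q = q^(dim V - 1)`.
-/

open Finset MvPolynomial

theorem card_fiber_mul_card_eq_of_surjective {G H F : Type*} [AddGroup G] [Fintype G]
    [AddGroup H] [Fintype H] [DecidableEq H] [FunLike F G H] [AddMonoidHomClass F G H]
    (φ : F) (hφ : Function.Surjective φ) (c : H) :
    #{g | φ g = c} * Fintype.card H = Fintype.card G := by
  calc #{g | φ g = c} * Fintype.card H = ∑ d : H, #{g | φ g = d} := by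
        rw [mul_comm, ← smul_eq_mul, ← card_univ, ← sum_const]
        exact sum_congr rfl fun d _ =>
          AddMonoidHom.card_fiber_eq_of_mem_range φ (hφ c) (hφ d)
    _ = Fintype.card G := (card_eq_sum_card_fiberwise fun g _ => mem_univ (φ g)).symm

theorem pow_injective_of_coprime_card_sub_one {M₀ : Type*} [GroupWithZero M₀] {k : ℕ}
    (hk : k ≠ 0) (hcop : k.Coprime (Nat.card M₀ - 1)) :
    Function.Injective (· ^ k : M₀ → M₀) := by
  intro a b hab
  simp only at hab
  obtain rfl | ha := eq_or_ne a 0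
  · exact ((pow_eq_zero_iff hk).1 (hab.symm.trans (zero_pow hk))).symm
  obtain rfl | hb := eq_or_ne b 0
  · exact (pow_eq_zero_iff hk).1 (hab.trans (zero_pow hk))
  have hunits : Units.mk0 a ha ^ k = Units.mk0 b hb ^ k := Units.ext (by simpa using hab)
  have hcard : (Nat.card M₀ˣ).Coprime k := by
    rwa [Nat.card_units, Nat.coprime_comm]
  simpa using congrArg Units.val (hcard.pow_left_bijective.injective hunits)

section Incidence

variable {α β : Type*} [Fintype α] (R : β → α → Prop) [∀ v f, Decidable (R v f)]
  (P : Finset β)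

theorem sum_sq_card_filter_eq :
    ∑ f, #{v ∈ P | R v f} ^ 2 = ∑ v ∈ P, ∑ w ∈ P, #{f | R v f ∧ R w f} := by
  simp only [card_filter, sq, sum_mul_sum, ite_zero_mul_ite_zero, one_mul]
  rw [sum_comm]
  exact sum_congr rfl fun v _ => sum_comm

theorem sum_sq_card_filter_sub_le {q : ℝ} (hq : 0 < q)
    (hdeg : ∀ v, (#{f | R v f} : ℝ) = Fintype.card α / q)
    (hcodeg : ∀ v w, v ≠ w → (#{f | R v f ∧ R w f} : ℝ) ≤ Fintype.card α / q ^ 2) :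
    ∑ f, ((#{v ∈ P | R v f} : ℝ) - #P / q) ^ 2 ≤ #P * (Fintype.card α / q) := by
  set N : ℝ := (Fintype.card α : ℝ) with hN
  have hfirst : ∑ f, (#{v ∈ P | R v f} : ℝ) = #P * (N / q) := by
    have := sum_card_bipartiteAbove_eq_sum_card_bipartiteBelow (s := P) (t := univ) R
    simp only [bipartiteAbove, bipartiteBelow] at this
    rw [← Nat.cast_sum, ← this, Nat.cast_sum, sum_congr rfl fun v _ => hdeg v, sum_const,
      nsmul_eq_mul]
  have hrow : ∀ v ∈ P, ∑ w ∈ P, (#{f | R v f ∧ R w f} : ℝ) ≤ N / q + (#P - 1) * (N / q ^ 2) := by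
    intro v hv
    classical
    rw [← add_sum_erase P _ hv]
    simp only [and_self, hdeg]
    gcongr
    calc ∑ w ∈ P.erase v, (#{f | R v f ∧ R w f} : ℝ) ≤ ∑ w ∈ P.erase v, N / q ^ 2 :=
          sum_le_sum fun w hw => hcodeg v w (ne_of_mem_erase hw).symm
      _ = (#P - 1) * (N / q ^ 2) := by
          rw [sum_const, nsmul_eq_mul, card_erase_of_mem hv, Nat.cast_sub (card_pos.2 ⟨v, hv⟩),
            Nat.cast_one]
  have hsecond : ∑ f, (#{v ∈ P | R v f} : ℝ) ^ 2 ≤ #P * (N / q + (#P - 1) * (N / q ^ 2)) :=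
    calc ∑ f, (#{v ∈ P | R v f} : ℝ) ^ 2 = ∑ v ∈ P, ∑ w ∈ P, (#{f | R v f ∧ R w f} : ℝ) := by
          exact_mod_cast sum_sq_card_filter_eq R P
      _ ≤ ∑ v ∈ P, (N / q + (#P - 1) * (N / q ^ 2)) := sum_le_sum hrow
      _ = #P * (N / q + (#P - 1) * (N / q ^ 2)) := by rw [sum_const, nsmul_eq_mul]
  have hexpand : ∑ f, ((#{v ∈ P | R v f} : ℝ) - #P / q) ^ 2 =
      ∑ f, (#{v ∈ P | R v f} : ℝ) ^ 2 - 2 * (#P / q) * ∑ f, (#{v ∈ P | R v f} : ℝ) +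
        N * (#P / q) ^ 2 := by
    simp only [sub_sq, sum_add_distrib, sum_sub_distrib, sum_const, card_univ, nsmul_eq_mul,
      ← sum_mul, ← mul_sum, hN]
    ring
  have hcancel : #P * (N / q + (#P - 1) * (N / q ^ 2)) - 2 * (#P / q) * (#P * (N / q)) +
      N * (#P / q) ^ 2 = #P * (N / q) - #P * N / q ^ 2 := by
    field_simp
    ring
  have hnonneg : 0 ≤ #P * N / q ^ 2 := by positivity
  rw [hexpand, hfirst]
  linarith

theorem abs_sum_card_filter_sub_le (L : Finset α) {q : ℝ} (hq : 0 < q)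
    (hdeg : ∀ v, (#{f | R v f} : ℝ) = Fintype.card α / q)
    (hcodeg : ∀ v w, v ≠ w → (#{f | R v f ∧ R w f} : ℝ) ≤ Fintype.card α / q ^ 2) :
    |(∑ f ∈ L, #{v ∈ P | R v f} : ℝ) - #P * #L / q| ≤
      √(Fintype.card α / q * (#P * #L)) := by
  have hsq : (∑ f ∈ L, ((#{v ∈ P | R v f} : ℝ) - #P / q)) ^ 2 ≤
      Fintype.card α / q * (#P * #L) :=
    calc (∑ f ∈ L, ((#{v ∈ P | R v f} : ℝ) - #P / q)) ^ 2
        ≤ #L * ∑ f ∈ L, ((#{v ∈ P | R v f} : ℝ) - #P / q) ^ 2 := sq_sum_le_card_mul_sum_sq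
      _ ≤ #L * ∑ f, ((#{v ∈ P | R v f} : ℝ) - #P / q) ^ 2 := by
          gcongr
          exact subset_univ L
      _ ≤ #L * (#P * (Fintype.card α / q)) := by
          gcongr
          exact sum_sq_card_filter_sub_le R P hq hdeg hcodeg
      _ = Fintype.card α / q * (#P * #L) := by ring
  convert Real.abs_le_sqrt hsq using 2
  rw [sum_sub_distrib, sum_const, nsmul_eq_mul]
  ring

end Incidence

section Evaluation

variable {σ K : Type*} [Field K] (V : Submodule K (MvPolynomial σ K))

noncomputable def evalOn (x : σ → K) : V →ₗ[K] K := (aeval x).toLinearMap ∘ₗ V.subtype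

@[simp]
theorem evalOn_apply (x : σ → K) (f : V) : evalOn V x f = eval x (f : MvPolynomial σ K) := rfl

theorem evalOn_surjective (h1 : (1 : MvPolynomial σ K) ∈ V) (x : σ → K) :
    Function.Surjective (evalOn V x) :=
  fun c => ⟨c • ⟨1, h1⟩, by simp⟩

theorem evalOn_prod_surjective (h1 : (1 : MvPolynomial σ K) ∈ V) {g : MvPolynomial σ K}
    (hg : g ∈ V) {x y : σ → K} (hxy : eval x g ≠ eval y g) :
    Function.Surjective ((evalOn V x).prod (evalOn V y)) := by
  rintro ⟨s, t⟩
  set β := (s - t) / (eval x g - eval y g)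
  have hβ : β * (eval x g - eval y g) = s - t := div_mul_cancel₀ _ (sub_ne_zero.2 hxy)
  refine ⟨(s - β * eval x g) • ⟨1, h1⟩ + β • ⟨g, hg⟩, ?_⟩
  refine Prod.ext (by simp) ?_
  simp only [SetLike.mk_smul_mk, AddMemClass.mk_add_mk, LinearMap.prod_apply, Function.prod_apply,
    evalOn_apply, map_add, smul_eval, map_one, mul_one]
  linear_combination -hβ

theorem exists_mem_eval_ne {x y : σ → K} (hxy : x ≠ y)
    (hpure : ∀ j, ∃ k, 0 < k ∧ k.Coprime (Nat.card K - 1) ∧ monomial (Finsupp.single j k) 1 ∈ V) :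
    ∃ g ∈ V, eval x g ≠ eval y g := by
  obtain ⟨j, hj⟩ := Function.ne_iff.1 hxy
  obtain ⟨k, hk, hcop, hmem⟩ := hpure j
  refine ⟨_, hmem, fun h => hj (pow_injective_of_coprime_card_sub_one hk.ne' hcop ?_)⟩
  simpa [eval_monomial] using h

variable [Fintype K] [DecidableEq K] [Fintype V]

theorem card_filter_eval_eq_mul (h1 : (1 : MvPolynomial σ K) ∈ V) (x : σ → K) (c : K) :
    #{f : V | eval x (f : MvPolynomial σ K) = c} * Fintype.card K = Fintype.card V :=
  card_fiber_mul_card_eq_of_surjective (evalOn V x) (evalOn_surjective V h1 x) c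

theorem card_filter_eval_eq_and_eval_eq_mul (h1 : (1 : MvPolynomial σ K) ∈ V)
    {g : MvPolynomial σ K} (hg : g ∈ V) {x y : σ → K} (hxy : eval x g ≠ eval y g) (c d : K) :
    #{f : V | eval x (f : MvPolynomial σ K) = c ∧ eval y (f : MvPolynomial σ K) = d} *
      Fintype.card K ^ 2 = Fintype.card V := by
  simpa [sq, Prod.ext_iff] using
    card_fiber_mul_card_eq_of_surjective _ (evalOn_prod_surjective V h1 hg hxy) (c, d)

end Evaluation

section Graphs

variable {m : ℕ} {K : Type*} [Field K] [Fintype K] [DecidableEq K]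
  (V : Submodule K (MvPolynomial (Fin m) K)) [Fintype V]

theorem card_filter_graph_mem_eq (h1 : (1 : MvPolynomial (Fin m) K) ∈ V) (v : Fin (m + 1) → K) :
    (#{f : V | eval (Fin.init v) f.1 = v (Fin.last m)} : ℝ) = Fintype.card V / Fintype.card K := by
  rw [eq_div_iff (by exact_mod_cast Fintype.card_ne_zero)]
  exact_mod_cast card_filter_eval_eq_mul V h1 _ _

theorem card_filter_graph_mem_and_mem_le (h1 : (1 : MvPolynomial (Fin m) K) ∈ V)
    (hsep : ∀ x y : Fin m → K, x ≠ y → ∃ g ∈ V, eval x g ≠ eval y g)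
    {v w : Fin (m + 1) → K} (hvw : v ≠ w) :
    (#{f : V | eval (Fin.init v) f.1 = v (Fin.last m) ∧ eval (Fin.init w) f.1 = w (Fin.last m)} : ℝ)
      ≤ Fintype.card V / Fintype.card K ^ 2 := by
  by_cases hinit : Fin.init v = Fin.init w
  · have hlast : v (Fin.last m) ≠ w (Fin.last m) := fun h =>
      hvw (by rw [← Fin.snoc_init_self v, ← Fin.snoc_init_self w, hinit, h])
    rw [filter_false_of_mem fun f _ ⟨hv, hw⟩ => hlast (hv ▸ hinit ▸ hw), card_empty, Nat.cast_zero]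
    positivity
  · obtain ⟨g, hg, hne⟩ := hsep _ _ hinit
    rw [le_div_iff₀ (pow_pos (Nat.cast_pos.2 Fintype.card_pos) 2)]
    exact_mod_cast (card_filter_eval_eq_and_eval_eq_mul V h1 hg hne _ _).le

theorem abs_sum_card_filter_graph_mem_sub_le (h1 : (1 : MvPolynomial (Fin m) K) ∈ V)
    (hsep : ∀ x y : Fin m → K, x ≠ y → ∃ g ∈ V, eval x g ≠ eval y g)
    (P : Finset (Fin (m + 1) → K)) (L : Finset (MvPolynomial (Fin m) K)) (hL : ∀ f ∈ L, f ∈ V) :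
    |((∑ v ∈ P, #{f ∈ L | eval (Fin.init v) f = v (Fin.last m)} : ℕ) : ℝ) -
        #P * #L / Fintype.card K| ≤ √(Fintype.card V / Fintype.card K * (#P * #L)) := by
  classical
  have key := abs_sum_card_filter_sub_le
    (fun (v : Fin (m + 1) → K) (f : V) => eval (Fin.init v) f.1 = v (Fin.last m))
    P (L.subtype (· ∈ V)) (by exact_mod_cast Fintype.card_pos) (card_filter_graph_mem_eq V h1)
    fun _ _ => card_filter_graph_mem_and_mem_le V h1 hsep
  have hcount : ∑ v ∈ P, #{f ∈ L | eval (Fin.init v) f = v (Fin.last m)} =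
      ∑ f ∈ L.subtype (· ∈ V), #{v ∈ P | eval (Fin.init v) f.1 = v (Fin.last m)} := by
    rw [sum_subtype_of_mem (fun f => #{v ∈ P | eval (Fin.init v) f = v (Fin.last m)}) hL]
    exact sum_card_bipartiteAbove_eq_sum_card_bipartiteBelow _
  have hcard : #(L.subtype (· ∈ V)) = #L := by rw [card_subtype, filter_true_of_mem hL]
  rwa [hcount, ← hcard, Nat.cast_sum]

end Graphs

/-- Point–polynomial incidence bound for a subspace `V` with property (*):
`|I(P,L) − |P||L|/q| ≤ q^((dim V −1)/2)·√(|P||L|)`. -/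
theorem stmt15 {m : ℕ} {F : Type} [Field F] [Fintype F] [DecidableEq F]
    (V : Submodule F (MvPolynomial (Fin m) F)) (I : Finset (Fin m →₀ ℕ))
    (hV : V = Submodule.span F ((fun d => MvPolynomial.monomial d (1 : F)) '' I))
    (h0 : (0 : Fin m →₀ ℕ) ∈ I)
    (hpure : ∀ j : Fin m, ∃ k : ℕ, 0 < k ∧ Nat.gcd k (Fintype.card F - 1) = 1 ∧
      Finsupp.single j k ∈ I)
    (P : Finset (Fin (m + 1) → F)) (L : Finset (MvPolynomial (Fin m) F))
    (hL : ∀ f ∈ L, f ∈ V) :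
    |((∑ v ∈ P, (L.filter fun f =>
        MvPolynomial.eval (fun j : Fin m => v j.castSucc) f = v (Fin.last m)).card : ℕ) : ℝ) -
        (P.card : ℝ) * (L.card : ℝ) / (Fintype.card F : ℝ)| ≤
      (Fintype.card F : ℝ) ^ (((Module.finrank F V : ℝ) - 1) / 2) *
        Real.sqrt ((P.card : ℝ) * (L.card : ℝ)) := by
  have hmem : ∀ d ∈ I, monomial d (1 : F) ∈ V := fun d hd =>
    hV ▸ Submodule.subset_span ⟨d, hd, rfl⟩
  have : FiniteDimensional F V := hV ▸ FiniteDimensional.span_of_finite F (I.finite_toSet.image _)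
  have : Finite V := Module.finite_of_finite F
  have : Fintype V := Fintype.ofFinite V
  have hsep : ∀ x y : Fin m → F, x ≠ y → ∃ g ∈ V, eval x g ≠ eval y g := fun x y hxy =>
    exists_mem_eval_ne V hxy fun j => by
      obtain ⟨k, hk, hcop, hI⟩ := hpure j
      exact ⟨k, hk, Nat.card_eq_fintype_card (α := F) ▸ hcop, hmem _ hI⟩
  have hq : (0 : ℝ) < Fintype.card F := Nat.cast_pos.2 Fintype.card_pos
  have hexp : (Fintype.card F : ℝ) ^ (((Module.finrank F V : ℝ) - 1) / 2) =
      √(Fintype.card V / Fintype.card F) := by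
    rw [Module.card_eq_pow_finrank (K := F) (V := V), Nat.cast_pow, ← Real.rpow_natCast,
      ← Real.rpow_sub_one hq.ne', Real.sqrt_eq_rpow, ← Real.rpow_mul hq.le]
    ring_nf
  rw [hexp, ← Real.sqrt_mul (by positivity)]
  exact abs_sum_card_filter_graph_mem_sub_le V (hmem 0 h0) hsep P L hL
end

section
/- Let L₀ = {x₁·g : g ∈ V_{m,r−1}} ⊆ 𝔽_q[x₁,…,x_m], where V_{m,r−1} is the space of polynomials of total degree at most r−1, and let P₀ = {(α, 0) : α ∈ 𝔽_q^m} ⊆ 𝔽_q^(m+1). Then the number of incidences satisfies I(P₀, L₀) = (2 − 1/q)·q^(m−1)·|L₀|. -/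
open MvPolynomial Finset

section aux

variable {m r : ℕ} {F : Type} [Field F] [Fintype F]

private lemma nat_card_sigma {ι : Type*} [Fintype ι] (f : ι → Type*) [∀ i, Finite (f i)] :
    Nat.card (Σ i, f i) = ∑ i, Nat.card (f i) := by
  classical
  have : ∀ i, Fintype (f i) := fun i => Fintype.ofFinite _
  simp [Nat.card_eq_fintype_card, Fintype.card_sigma]

private lemma ker_card (n : ℕ) (α : Fin m → F) :
    Nat.card {g : restrictTotalDegree (Fin m) F n //
        MvPolynomial.eval α (g : MvPolynomial (Fin m) F) = 0} * Fintype.card F =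
      Nat.card (restrictTotalDegree (Fin m) F n) := by
  set V := restrictTotalDegree (Fin m) F n
  let φ : V →+ F :=
    { toFun := fun g => MvPolynomial.eval α (g : MvPolynomial (Fin m) F)
      map_zero' := by simp
      map_add' := by intro a b; simp }
  have hsurj : Function.Surjective φ := by
    intro c
    refine ⟨⟨MvPolynomial.C c, ?_⟩, by simp [φ]⟩
    rw [mem_restrictTotalDegree]
    simp [totalDegree_C]
  have h1 : Nat.card {g : V // MvPolynomial.eval α (g : MvPolynomial (Fin m) F) = 0} =
      Nat.card φ.ker :=
    Nat.card_congr (Equiv.subtypeEquivRight fun x => Iff.rfl)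
  have h2 : Nat.card (V ⧸ φ.ker) = Fintype.card F := by
    rw [Nat.card_congr (QuotientAddGroup.quotientKerEquivOfSurjective φ hsurj).toEquiv]
    exact Nat.card_eq_fintype_card
  rw [h1, AddSubgroup.card_eq_card_quotient_mul_card_addSubgroup φ.ker, h2, mul_comm]

private noncomputable def fiber_equiv (n : ℕ) (i0 : Fin m) (α : Fin m → F) :
    {g : restrictTotalDegree (Fin m) F n //
        MvPolynomial.eval α (MvPolynomial.X i0 * (g : MvPolynomial (Fin m) F)) = 0} ≃
      {f : MvPolynomial (Fin m) F //
        (∃ g : MvPolynomial (Fin m) F, g.totalDegree ≤ n ∧ f = MvPolynomial.X i0 * g) ∧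
          MvPolynomial.eval α f = 0} := by
  refine Equiv.ofBijective
    (fun g => ⟨MvPolynomial.X i0 * (g : MvPolynomial (Fin m) F),
      ⟨g, (mem_restrictTotalDegree _ _ _).mp g.1.2, rfl⟩, g.2⟩) ⟨?_, ?_⟩
  · rintro ⟨⟨g, hg⟩, h⟩ ⟨⟨g', hg'⟩, h'⟩ hgg'
    have := congrArg Subtype.val hgg'
    simp only at this
    have : g = g' := mul_left_cancel₀ (X_ne_zero i0) this
    subst this; rfl
  · rintro ⟨f, ⟨g, hdeg, hf⟩, h0⟩
    refine ⟨⟨⟨g, (mem_restrictTotalDegree _ _ _).mpr hdeg⟩, ?_⟩, ?_⟩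
    · rw [← hf]; exact h0
    · simp [hf]

private noncomputable def L_equiv (n : ℕ) (i0 : Fin m) :
    {f : MvPolynomial (Fin m) F //
        ∃ g : MvPolynomial (Fin m) F, g.totalDegree ≤ n ∧ f = MvPolynomial.X i0 * g} ≃
      restrictTotalDegree (Fin m) F n := by
  refine (Equiv.ofBijective
    (fun g : restrictTotalDegree (Fin m) F n =>
      (⟨MvPolynomial.X i0 * (g : MvPolynomial (Fin m) F),
        g, (mem_restrictTotalDegree _ _ _).mp g.2, rfl⟩ :
        {f : MvPolynomial (Fin m) F //
          ∃ g : MvPolynomial (Fin m) F, g.totalDegree ≤ n ∧ f = MvPolynomial.X i0 * g}))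
    ⟨?_, ?_⟩).symm
  · rintro ⟨g, hg⟩ ⟨g', hg'⟩ hgg'
    have := congrArg Subtype.val hgg'
    simp only at this
    have : g = g' := mul_left_cancel₀ (X_ne_zero i0) this
    subst this; rfl
  · rintro ⟨f, g, hdeg, hf⟩
    exact ⟨⟨g, (mem_restrictTotalDegree _ _ _).mpr hdeg⟩, by simp [hf]⟩

end aux

/-- Incidence count for the example `P₀ = {(α,0) : α ∈ 𝔽_q^m}` and
`L₀ = {x₁·g : deg g ≤ r−1}`: `I(P₀,L₀) = (2 − 1/q)·q^(m−1)·|L₀|`. -/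
theorem stmt17 {m r : ℕ} {F : Type} [Field F] [Fintype F] (hm : 0 < m) (hr : 1 ≤ r) :
    (Nat.card {p : (Fin m → F) × MvPolynomial (Fin m) F //
        (∃ g : MvPolynomial (Fin m) F, g.totalDegree ≤ r - 1 ∧
          p.2 = MvPolynomial.X (⟨0, hm⟩ : Fin m) * g) ∧
        MvPolynomial.eval p.1 p.2 = 0} : ℝ) =
      (2 - 1 / (Fintype.card F : ℝ)) * (Fintype.card F : ℝ) ^ (m - 1) *
        (Nat.card {f : MvPolynomial (Fin m) F //
          ∃ g : MvPolynomial (Fin m) F, g.totalDegree ≤ r - 1 ∧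
            f = MvPolynomial.X (⟨0, hm⟩ : Fin m) * g} : ℝ) := by
  classical
  set i0 : Fin m := ⟨0, hm⟩
  set n : ℕ := r - 1
  set V := restrictTotalDegree (Fin m) F n
  haveI : Finite V := Module.finite_of_finite F
  set q : ℕ := Fintype.card F with hq
  have hq0 : (q : ℝ) ≠ 0 := by positivity
  set N : ℕ := Nat.card V with hN
  -- card of the line set
  have hL : (Nat.card {f : MvPolynomial (Fin m) F //
      ∃ g : MvPolynomial (Fin m) F, g.totalDegree ≤ n ∧ f = MvPolynomial.X i0 * g}) = N :=
    Nat.card_congr (L_equiv n i0)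
  -- the incidence set as a sigma type
  have hS : Nat.card {p : (Fin m → F) × MvPolynomial (Fin m) F //
        (∃ g : MvPolynomial (Fin m) F, g.totalDegree ≤ n ∧
          p.2 = MvPolynomial.X i0 * g) ∧
        MvPolynomial.eval p.1 p.2 = 0} =
      Nat.card (Σ α : Fin m → F, {g : V //
        MvPolynomial.eval α (MvPolynomial.X i0 * (g : MvPolynomial (Fin m) F)) = 0}) := by
    refine Nat.card_congr ?_
    refine Equiv.trans ?_ (Equiv.sigmaCongrRight fun α => (fiber_equiv n i0 α).symm)
    exact
      { toFun := fun p => ⟨p.1.1, ⟨p.1.2, p.2⟩⟩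
        invFun := fun s => ⟨(s.1, s.2.1), s.2.2⟩
        left_inv := fun p => rfl
        right_inv := fun s => rfl }
  rw [hS, hL]
  rw [nat_card_sigma]
  -- compute each fiber
  have hfiber : ∀ α : Fin m → F,
      (Nat.card {g : V //
        MvPolynomial.eval α (MvPolynomial.X i0 * (g : MvPolynomial (Fin m) F)) = 0} : ℝ) =
      if α i0 = 0 then (N : ℝ) else (N : ℝ) / q := by
    intro α
    by_cases h : α i0 = 0
    · rw [if_pos h]
      have : ∀ g : V,
          MvPolynomial.eval α (MvPolynomial.X i0 * (g : MvPolynomial (Fin m) F)) = 0 := by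
        intro g; simp [h]
      rw [Nat.card_congr (Equiv.subtypeUnivEquiv this)]
    · rw [if_neg h]
      have he : {g : V //
          MvPolynomial.eval α (MvPolynomial.X i0 * (g : MvPolynomial (Fin m) F)) = 0} ≃
          {g : V // MvPolynomial.eval α (g : MvPolynomial (Fin m) F) = 0} := by
        refine Equiv.subtypeEquivRight fun g => ?_
        simp [mul_eq_zero, h]
      rw [Nat.card_congr he]
      have := ker_card (m := m) (F := F) n α
      rw [eq_div_iff hq0]
      exact_mod_cast this
  push_cast
  rw [Finset.sum_congr rfl fun α _ => hfiber α]
  rw [Finset.sum_ite, Finset.sum_const, Finset.sum_const]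
  -- count the filters
  have hc1 : (Finset.univ.filter (fun α : Fin m → F => α i0 = 0)).card = q ^ (m - 1) := by
    rw [← Fintype.card_subtype]
    have e1 : {α : Fin m → F // α i0 = 0} ≃ ({j : Fin m // j ≠ i0} → F) :=
      { toFun := fun a => fun j => a.1 j.1
        invFun := fun f => ⟨fun j => if hj : j = i0 then 0 else f ⟨j, hj⟩, by simp⟩
        left_inv := by
          rintro ⟨a, ha⟩
          ext j
          by_cases hj : j = i0 <;> simp [hj, ha]
        right_inv := by
          intro f; ext j; simp [j.2] }
    rw [Fintype.card_congr e1, Fintype.card_fun]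
    congr 1
    rw [Fintype.card_subtype_compl, Fintype.card_subtype_eq, Fintype.card_fin]
  have hc2 : (Finset.univ.filter (fun α : Fin m → F => ¬ α i0 = 0)).card
      = q ^ m - q ^ (m - 1) := by
    have h := Finset.card_filter_add_card_filter_not
      (s := (Finset.univ : Finset (Fin m → F))) (p := fun α : Fin m → F => α i0 = 0)
    rw [Finset.card_univ, Fintype.card_fun, Fintype.card_fin, hc1] at h
    exact Nat.eq_sub_of_add_eq' h
  rw [hc1, hc2]
  simp only [nsmul_eq_mul]
  have hle : q ^ (m - 1) ≤ q ^ m :=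
    Nat.pow_le_pow_right Fintype.card_pos (Nat.sub_le m 1)
  push_cast [Nat.cast_sub hle]
  have hqm : (q : ℝ) ^ m = (q : ℝ) ^ (m - 1) * q := by
    rw [← pow_succ]
    congr 1
    exact (Nat.succ_pred_eq_of_pos hm).symm
  rw [hqm]
  field_simp
  ring
end

section
/- For every set of points P ⊆ 𝔽_q^(m+1) and every set L of m-variate polynomials over 𝔽_q of degree at most r with r < q, the number of incidences satisfies I(P,L) ≤ |P| + r^(1/2)·q^((m−1)/2)·|P|^(1/2)·|L|. -/
open MvPolynomial Finset in
lemma sz_aux {F : Type} [Field F] [Fintype F] [DecidableEq F] :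
    ∀ (n : ℕ) (p : MvPolynomial (Fin n) F), p ≠ 0 →
      (univ.filter fun x : Fin n → F => MvPolynomial.eval x p = 0).card * Fintype.card F ≤
        p.totalDegree * (Fintype.card F) ^ n := by
  intro n
  induction n with
  | zero =>
    intro p hp
    obtain ⟨c, rfl⟩ := MvPolynomial.C_surjective (Fin 0) p
    have hc : c ≠ 0 := by rintro rfl; simp at hp
    have : (univ.filter fun x : Fin 0 → F => MvPolynomial.eval x (C c) = 0) = ∅ := by
      apply Finset.filter_eq_empty_iff.mpr
      intro x _
      simpa using hc
    simp [this, hc]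
  | succ n ih =>
    intro p hp
    set q := Fintype.card F with hq
    set P := finSuccEquiv F n p with hP
    have hPne : P ≠ 0 := by
      simpa [hP] using (EmbeddingLike.map_ne_zero_iff (f := finSuccEquiv F n)).mpr hp
    set k := P.natDegree with hk
    set a := P.coeff k with ha
    have hane : a ≠ 0 := by
      rw [ha, hk]
      exact Polynomial.leadingCoeff_ne_zero.mpr hPne
    have hdeg : a.totalDegree + k ≤ p.totalDegree :=
      MvPolynomial.totalDegree_coeff_finSuccEquiv_add_le p k hane
    have hkle : k ≤ p.totalDegree := le_trans (Nat.le_add_left _ _) hdeg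
    set Z := univ.filter fun x : Fin (n+1) → F => MvPolynomial.eval x p = 0 with hZ
    set A := univ.filter fun t : Fin n → F => MvPolynomial.eval t a = 0 with hA
    -- fiberwise count
    have hcard : Z.card = ∑ t : Fin n → F, (Z.filter fun x => Fin.tail x = t).card :=
      Finset.card_eq_sum_card_fiberwise (fun x _ => Finset.mem_univ _)
    have fib_le_q : ∀ t : Fin n → F, (Z.filter fun x => Fin.tail x = t).card ≤ q := by
      intro t
      have hsub : (Z.filter fun x => Fin.tail x = t) ⊆
          univ.image (fun y : F => Fin.cons y t) := by
        intro x hx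
        rw [Finset.mem_filter] at hx
        refine Finset.mem_image.mpr ⟨x 0, Finset.mem_univ _, ?_⟩
        rw [← hx.2]
        exact Fin.cons_self_tail x
      calc (Z.filter fun x => Fin.tail x = t).card ≤ (univ.image (fun y : F => Fin.cons y t)).card :=
            Finset.card_le_card hsub
        _ ≤ (univ : Finset F).card := Finset.card_image_le
        _ = q := by simp [hq]
    have fib_le_k : ∀ t : Fin n → F, t ∉ A → (Z.filter fun x => Fin.tail x = t).card ≤ k := by
      intro t ht
      have hat : MvPolynomial.eval t a ≠ 0 := by
        simp only [hA, Finset.mem_filter, Finset.mem_univ, true_and] at ht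
        exact ht
      set Pt := Polynomial.map (MvPolynomial.eval t) P with hPt
      have hPtne : Pt ≠ 0 := by
        intro h
        apply hat
        have := Polynomial.coeff_map (MvPolynomial.eval t) k (p := P)
        rw [← hPt, h] at this
        simpa using this.symm
      have hsub : (Z.filter fun x => Fin.tail x = t) ⊆
          Pt.roots.toFinset.image (fun y : F => Fin.cons y t) := by
        intro x hx
        rw [Finset.mem_filter, hZ, Finset.mem_filter] at hx
        obtain ⟨⟨_, hx0⟩, hxt⟩ := hx
        refine Finset.mem_image.mpr ⟨x 0, ?_, by rw [← hxt]; exact Fin.cons_self_tail x⟩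
        rw [Multiset.mem_toFinset, Polynomial.mem_roots hPtne]
        have hxe : x = Fin.cons (x 0) t := by
          rw [← hxt]; exact (Fin.cons_self_tail x).symm
        rw [hxe] at hx0
        rw [MvPolynomial.eval_eq_eval_mv_eval'] at hx0
        exact hx0
      calc (Z.filter fun x => Fin.tail x = t).card
          ≤ Pt.roots.toFinset.card := le_trans (Finset.card_le_card hsub) Finset.card_image_le
        _ ≤ Multiset.card Pt.roots := Multiset.toFinset_card_le _
        _ ≤ Pt.natDegree := Polynomial.card_roots' Pt
        _ ≤ k := by rw [hk]; exact Polynomial.natDegree_map_le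
    have hsplit : Z.card ≤ A.card * q + q ^ n * k := by
      rw [hcard, ← Finset.sum_filter_add_sum_filter_not univ (fun t => MvPolynomial.eval t a = 0)]
      have h1 : ∑ t ∈ univ.filter (fun t : Fin n → F => MvPolynomial.eval t a = 0),
          (Z.filter fun x => Fin.tail x = t).card ≤ A.card * q := by
        rw [← hA]
        calc _ ≤ ∑ _t ∈ A, q := Finset.sum_le_sum (fun t _ => fib_le_q t)
          _ = A.card * q := by rw [Finset.sum_const, smul_eq_mul]
      have h2 : ∑ t ∈ univ.filter (fun t : Fin n → F => ¬ MvPolynomial.eval t a = 0),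
          (Z.filter fun x => Fin.tail x = t).card ≤ q ^ n * k := by
        calc _ ≤ ∑ _t ∈ univ.filter (fun t : Fin n → F => ¬ MvPolynomial.eval t a = 0), k := by
              apply Finset.sum_le_sum
              intro t ht
              apply fib_le_k
              simp only [Finset.mem_filter] at ht ⊢
              rw [hA]; simp only [Finset.mem_filter, Finset.mem_univ, true_and]
              exact ht.2
          _ = (univ.filter (fun t : Fin n → F => ¬ MvPolynomial.eval t a = 0)).card * k := by
              rw [Finset.sum_const, smul_eq_mul]
          _ ≤ (univ : Finset (Fin n → F)).card * k :=
              Nat.mul_le_mul_right k (Finset.card_le_card (Finset.filter_subset _ _))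
          _ = q ^ n * k := by simp [hq, Fintype.card_fun]
      omega
    have hih : A.card * q ≤ a.totalDegree * q ^ n := ih a hane
    calc Z.card * q ≤ (A.card * q + q ^ n * k) * q := Nat.mul_le_mul_right q hsplit
      _ = (A.card * q) * q + k * q ^ (n + 1) := by ring
      _ ≤ (a.totalDegree * q ^ n) * q + k * q ^ (n + 1) := by
          exact Nat.add_le_add_right (Nat.mul_le_mul_right q hih) _
      _ = (a.totalDegree + k) * q ^ (n + 1) := by ring
      _ ≤ p.totalDegree * q ^ (n + 1) := Nat.mul_le_mul_right _ hdeg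

open Finset in
lemma swap_count {α β : Type*} [DecidableEq α] [DecidableEq β] (P : Finset α) (S : Finset β)
    (Q : α → β → Prop) [∀ a b, Decidable (Q a b)] :
    ∑ v ∈ P, (S.filter fun s => Q v s).card = ∑ s ∈ S, (P.filter fun v => Q v s).card := by
  simp_rw [Finset.card_filter]
  exact Finset.sum_comm

open MvPolynomial Finset in
/-- Cauchy–Schwarz / Schwartz–Zippel point–polynomial incidence bound:
`I(P,L) ≤ |P| + r^(1/2)·q^((m−1)/2)·|P|^(1/2)·|L|` for polynomials of degree at most `r < q`. -/
theorem stmt18 {m r : ℕ} {F : Type} [Field F] [Fintype F] [DecidableEq F] (hm : 0 < m)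
    (hr : r < Fintype.card F)
    (P : Finset (Fin (m + 1) → F)) (L : Finset (MvPolynomial (Fin m) F))
    (hL : ∀ f ∈ L, f.totalDegree ≤ r) :
    ((∑ v ∈ P, (L.filter fun f =>
        MvPolynomial.eval (fun j : Fin m => v j.castSucc) f = v (Fin.last m)).card : ℕ) : ℝ) ≤
      (P.card : ℝ) +
        Real.sqrt ((r : ℝ) * (Fintype.card F : ℝ) ^ (m - 1) * (P.card : ℝ)) * (L.card : ℝ) := by
  classical
  set q := Fintype.card F with hq
  have hq0 : 0 < q := Fintype.card_pos
  set Q : (Fin (m+1) → F) → MvPolynomial (Fin m) F → Prop :=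
    fun v f => MvPolynomial.eval (fun j : Fin m => v j.castSucc) f = v (Fin.last m) with hQ
  set I : ℕ := ∑ v ∈ P, (L.filter fun f => Q v f).card with hI
  -- cross bound
  have cross : ∀ f ∈ L, ∀ g ∈ L, f ≠ g →
      (P.filter fun v => Q v f ∧ Q v g).card ≤ r * q ^ (m - 1) := by
    intro f hf g hg hfg
    have hsubne : f - g ≠ 0 := sub_ne_zero.mpr hfg
    have hdeg : (f - g).totalDegree ≤ r :=
      le_trans (MvPolynomial.totalDegree_sub f g) (max_le (hL f hf) (hL g hg))
    set Z := univ.filter fun x : Fin m → F => MvPolynomial.eval x (f - g) = 0 with hZ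
    have hZcard : Z.card ≤ r * q ^ (m - 1) := by
      have h1 := sz_aux m (f - g) hsubne
      have h2 : Z.card * q ≤ r * q ^ m := le_trans h1 (Nat.mul_le_mul_right _ hdeg)
      have hqm : q ^ m = q ^ (m - 1) * q := by
        rw [← pow_succ, Nat.sub_add_cancel hm]
      rw [hqm, ← mul_assoc] at h2
      exact Nat.le_of_mul_le_mul_right h2 hq0
    have hmaps : ∀ v ∈ P.filter fun v => Q v f ∧ Q v g,
        (fun j : Fin m => v j.castSucc) ∈ Z := by
      intro v hv
      simp only [Finset.mem_filter] at hv
      simp only [hZ, Finset.mem_filter, Finset.mem_univ, true_and, map_sub]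
      have h1 := hv.2.1
      have h2 := hv.2.2
      simp only [hQ] at h1 h2
      rw [h1, h2, sub_self]
    have hinj : Set.InjOn (fun v : Fin (m+1) → F => fun j : Fin m => v j.castSucc)
        (P.filter fun v => Q v f ∧ Q v g) := by
      intro v hv w hw hvw
      simp only [Finset.coe_filter, Set.mem_setOf_eq, hQ] at hv hw
      have hvw' : (fun j : Fin m => v j.castSucc) = fun j : Fin m => w j.castSucc := hvw
      funext j
      refine Fin.lastCases ?_ ?_ j
      · rw [← hv.2.1, ← hw.2.1, hvw']
      · intro i
        exact congrFun hvw' i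
    calc (P.filter fun v => Q v f ∧ Q v g).card ≤ Z.card :=
          Finset.card_le_card_of_injOn _ hmaps hinj
      _ ≤ r * q ^ (m - 1) := hZcard
  -- sum of squares bound
  have hsq : ∑ v ∈ P, (L.filter fun f => Q v f).card ^ 2
      ≤ I + L.card ^ 2 * (r * q ^ (m - 1)) := by
    have expand : ∀ v, (L.filter fun f => Q v f).card ^ 2 =
        ∑ f ∈ L, (L.filter fun g => Q v f ∧ Q v g).card := by
      intro v
      have : ∀ f ∈ L, (L.filter fun g => Q v f ∧ Q v g).card =
          if Q v f then (L.filter fun g => Q v g).card else 0 := by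
        intro f _
        by_cases h : Q v f
        · rw [if_pos h]
          congr 1
          apply Finset.filter_congr
          intro g _
          exact and_iff_right h
        · rw [if_neg h, Finset.card_eq_zero]
          apply Finset.filter_eq_empty_iff.mpr
          intro g _
          exact fun hc => h hc.1
      rw [Finset.sum_congr rfl this, Finset.sum_ite, Finset.sum_const, Finset.sum_const]
      simp [sq]
    calc ∑ v ∈ P, (L.filter fun f => Q v f).card ^ 2
        = ∑ v ∈ P, ∑ f ∈ L, (L.filter fun g => Q v f ∧ Q v g).card := by
          exact Finset.sum_congr rfl (fun v _ => expand v)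
      _ = ∑ f ∈ L, ∑ v ∈ P, (L.filter fun g => Q v f ∧ Q v g).card := Finset.sum_comm
      _ = ∑ f ∈ L, ∑ g ∈ L, (P.filter fun v => Q v f ∧ Q v g).card := by
          refine Finset.sum_congr rfl (fun f _ => ?_)
          exact swap_count P L (fun v g => Q v f ∧ Q v g)
      _ ≤ ∑ f ∈ L, ((P.filter fun v => Q v f).card + L.card * (r * q ^ (m - 1))) := by
          refine Finset.sum_le_sum (fun f hf => ?_)
          rw [← Finset.add_sum_erase L _ hf]
          have hdiag : (P.filter fun v => Q v f ∧ Q v f).card =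
              (P.filter fun v => Q v f).card := by
            congr 1
            exact Finset.filter_congr (fun v _ => by simp)
          rw [hdiag]
          refine Nat.add_le_add_left ?_ _
          calc ∑ g ∈ L.erase f, (P.filter fun v => Q v f ∧ Q v g).card
              ≤ ∑ _g ∈ L.erase f, r * q ^ (m - 1) := by
                refine Finset.sum_le_sum (fun g hg => ?_)
                exact cross f hf g (Finset.mem_of_mem_erase hg)
                  (fun h => (Finset.ne_of_mem_erase hg) h.symm)
            _ = (L.erase f).card * (r * q ^ (m - 1)) := by
                rw [Finset.sum_const, smul_eq_mul]
            _ ≤ L.card * (r * q ^ (m - 1)) :=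
                Nat.mul_le_mul_right _ (Finset.card_le_card (Finset.erase_subset _ _))
      _ = (∑ f ∈ L, (P.filter fun v => Q v f).card) + L.card * (L.card * (r * q ^ (m - 1))) := by
          rw [Finset.sum_add_distrib, Finset.sum_const, smul_eq_mul]
      _ = I + L.card ^ 2 * (r * q ^ (m - 1)) := by
          rw [hI, swap_count P L Q]; ring
  -- Cauchy–Schwarz
  have hcs : (I : ℝ) ^ 2 ≤ (P.card : ℝ) * ∑ v ∈ P, ((L.filter fun f => Q v f).card : ℝ) ^ 2 := by
    have := sq_sum_le_card_mul_sum_sq (s := P)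
      (f := fun v => ((L.filter fun f => Q v f).card : ℝ))
    rw [hI]
    push_cast
    exact this
  have hsqR : ∑ v ∈ P, ((L.filter fun f => Q v f).card : ℝ) ^ 2
      ≤ (I : ℝ) + (L.card : ℝ) ^ 2 * ((r : ℝ) * (q : ℝ) ^ (m - 1)) := by
    have := hsq
    have h' : ((∑ v ∈ P, (L.filter fun f => Q v f).card ^ 2 : ℕ) : ℝ)
        ≤ ((I + L.card ^ 2 * (r * q ^ (m - 1)) : ℕ) : ℝ) := Nat.cast_le.mpr this
    push_cast at h'
    exact h'
  -- conclusion
  set Rq : ℝ := (r : ℝ) * (q : ℝ) ^ (m - 1) with hRq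
  have hRq0 : 0 ≤ Rq := by positivity
  set S : ℝ := Real.sqrt (Rq * (P.card : ℝ)) with hS
  have hS0 : 0 ≤ S := Real.sqrt_nonneg _
  have hS2 : S ^ 2 = Rq * (P.card : ℝ) := Real.sq_sqrt (by positivity)
  have key : (I : ℝ) ^ 2 ≤ (P.card : ℝ) * ((I : ℝ) + (L.card : ℝ) ^ 2 * Rq) := by
    calc (I : ℝ) ^ 2 ≤ (P.card : ℝ) * ∑ v ∈ P, ((L.filter fun f => Q v f).card : ℝ) ^ 2 := hcs
      _ ≤ (P.card : ℝ) * ((I : ℝ) + (L.card : ℝ) ^ 2 * Rq) := by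
          apply mul_le_mul_of_nonneg_left hsqR (by positivity)
  show (I : ℝ) ≤ (P.card : ℝ) + S * (L.card : ℝ)
  by_contra hcon
  push_neg at hcon
  have hI0 : (0 : ℝ) ≤ (I : ℝ) := Nat.cast_nonneg _
  have hP0 : (0 : ℝ) ≤ (P.card : ℝ) := Nat.cast_nonneg _
  have hL0 : (0 : ℝ) ≤ (L.card : ℝ) := Nat.cast_nonneg _
  have hSL : (0 : ℝ) ≤ S * (L.card : ℝ) := mul_nonneg hS0 hL0
  nlinarith [key, hS2, mul_le_mul_of_nonneg_left (le_of_lt hcon) hSL,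
    mul_lt_mul_of_pos_left hcon (lt_of_le_of_lt (by positivity) hcon)]
end

section
/- For every set of points P ⊆ 𝔽_q^(m+1) and every set L ⊆ V_{m,r} of m-variate polynomials of degree at most r, I(P,L) ≤ |L| + q^(dim V_{m,r}/2 − 1)·|P|·|L|^(1/2). -/
/-!
The polynomials of `V_{m,r}` through two distinct points with different first `m` coordinates
form a fibre of the surjective linear map `f ↦ (f a, f b)` onto `𝔽_q²`, hence number at most
`q ^ (dim V_{m,r} - 2)`; through two points with equal first coordinates passes no polynomial.
Writing `I` for the number of incidences and `d f` for the number of points of `P` on `f`,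
Cauchy–Schwarz gives `I² ≤ |L| ∑ d f²`, and `∑ d f²` counts pairs of points on a common
polynomial: the diagonal contributes `I` and the off-diagonal at most `|P|² q ^ (dim V_{m,r} - 2)`.
Solving the quadratic inequality `I² ≤ |L| I + (q ^ (dim V_{m,r}/2 - 1) |P| √|L|)²` gives the bound.
-/

open Finset

theorem le_add_of_sq_le_mul_add_sq {x a b : ℝ} (ha : 0 ≤ a) (hb : 0 ≤ b)
    (h : x ^ 2 ≤ a * x + b ^ 2) : x ≤ a + b := by
  nlinarith

theorem sum_card_filter_sq_eq {α β : Type*} (R : α → β → Prop) [∀ v f, Decidable (R v f)]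
    (P : Finset α) (L : Finset β) :
    ∑ f ∈ L, #{v ∈ P | R v f} ^ 2 = ∑ v ∈ P, ∑ v' ∈ P, #{f ∈ L | R v f ∧ R v' f} := by
  simp only [card_filter, sq, sum_mul_sum, ite_zero_mul_ite_zero, mul_one]
  rw [sum_comm]
  refine sum_congr rfl fun v _ => ?_
  rw [sum_comm]

theorem sum_card_filter_le_of_card_filter_and_le {α β : Type*} [DecidableEq α]
    (R : α → β → Prop) [∀ v f, Decidable (R v f)] {P : Finset α} {L : Finset β} {c : ℝ}
    (hc : 0 ≤ c) (hpair : ∀ v ∈ P, ∀ v' ∈ P, v ≠ v' → (#{f ∈ L | R v f ∧ R v' f} : ℝ) ≤ c ^ 2) :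
    ((∑ v ∈ P, #{f ∈ L | R v f} : ℕ) : ℝ) ≤ #L + c * #P * √(#L) := by
  set I : ℝ := ((∑ v ∈ P, #{f ∈ L | R v f} : ℕ) : ℝ)
  have hrow : ∀ v ∈ P,
      (∑ v' ∈ P, #{f ∈ L | R v f ∧ R v' f} : ℝ) ≤ #{f ∈ L | R v f} + #P * c ^ 2 := by
    intro v hv
    rw [← add_sum_erase _ _ hv]
    simp only [and_self]
    gcongr
    calc (∑ v' ∈ P.erase v, #{f ∈ L | R v f ∧ R v' f} : ℝ) ≤ ∑ v' ∈ P.erase v, c ^ 2 :=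
          sum_le_sum fun v' hv' => hpair v hv v' (mem_of_mem_erase hv') (ne_of_mem_erase hv').symm
      _ ≤ #P * c ^ 2 := by
          rw [sum_const, nsmul_eq_mul]
          gcongr
          exact erase_subset v P
  have hdouble : I = ∑ f ∈ L, (#{v ∈ P | R v f} : ℝ) := by
    rw [← Nat.cast_sum]
    exact congrArg (Nat.cast : ℕ → ℝ) (sum_card_bipartiteAbove_eq_sum_card_bipartiteBelow R)
  have hcs : I ^ 2 ≤ #L * (I + #P * (#P * c ^ 2)) := by
    calc I ^ 2 ≤ #L * ∑ f ∈ L, (#{v ∈ P | R v f} : ℝ) ^ 2 := hdouble ▸ sq_sum_le_card_mul_sum_sq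
      _ = #L * ∑ v ∈ P, ∑ v' ∈ P, (#{f ∈ L | R v f ∧ R v' f} : ℝ) := by
          exact_mod_cast congrArg (#L * ·) (sum_card_filter_sq_eq R P L)
      _ ≤ #L * ∑ v ∈ P, ((#{f ∈ L | R v f} : ℝ) + #P * c ^ 2) := by
          gcongr with v hv
          exact hrow v hv
      _ = #L * (I + #P * (#P * c ^ 2)) := by
          simp only [I, sum_add_distrib, sum_const, nsmul_eq_mul, Nat.cast_sum]
  refine le_add_of_sq_le_mul_add_sq (Nat.cast_nonneg _) (by positivity) ?_
  rw [mul_pow, mul_pow, Real.sq_sqrt (Nat.cast_nonneg _)]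
  linarith

theorem AddMonoidHom.card_mul_card_le_of_injective {G H ι : Type*} [AddGroup G] [AddGroup H]
    [Finite G] (φ : G →+ H) (hφ : Function.Surjective φ) {e : ι → G}
    (he : Function.Injective e) {y : H} (hy : ∀ i, φ (e i) = y) :
    Nat.card ι * Nat.card H ≤ Nat.card G := by
  rcases isEmpty_or_nonempty ι with hι | ⟨⟨i₀⟩⟩
  · simp
  have hker : Nat.card ι ≤ Nat.card φ.ker :=
    Nat.card_le_card_of_injective (fun i => ⟨-e i₀ + e i, by simp [hy]⟩)
      fun i j hij => he (by simpa using congrArg Subtype.val hij)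
  calc Nat.card ι * Nat.card H ≤ Nat.card φ.ker * Nat.card H := Nat.mul_le_mul_right _ hker
    _ = Nat.card G := by
      rw [AddSubgroup.card_eq_card_quotient_mul_card_addSubgroup φ.ker, mul_comm,
        Nat.card_congr (QuotientAddGroup.quotientKerEquivOfSurjective φ hφ).toEquiv]

theorem Finsupp.natCard_sum_le_le_choose (m r : ℕ) :
    Nat.card {s : Fin m →₀ ℕ | (s.sum fun _ e => e) ≤ r} ≤ (m + r).choose r := by
  classical
  let pad (s : {s : Fin m →₀ ℕ | (s.sum fun _ e => e) ≤ r}) :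
      {P : Fin (m + 1) → ℕ // ∑ i, P i = r} :=
    ⟨Fin.snoc (s.1 : Fin m → ℕ) (r - s.1.sum fun _ e => e), by
      have hs : (s.1.sum fun _ e => e) = ∑ i, s.1 i := Finsupp.sum_fintype _ _ (by simp)
      have := s.2
      simp only [Set.mem_ofPred_eq, hs] at this
      simp [Fin.sum_univ_castSucc, hs, this]⟩
  have hpad : Function.Injective pad := fun s t hst => by
    ext i
    simpa [pad] using congrFun (congrArg Subtype.val hst) i.castSucc
  calc _ ≤ Nat.card (Sym (Fin (m + 1)) r) :=
        Nat.card_le_card_of_injective _ ((Sym.equivNatSumOfFintype _ r).symm.injective.comp hpad)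
    _ = (m + r).choose r := by rw [Sym.natCard_sym_eq_choose]; simp

namespace MvPolynomial

theorem natCard_restrictTotalDegree_le {K : Type*} [Field K] [Finite K] (m r : ℕ) :
    Nat.card (restrictTotalDegree (Fin m) K r) ≤ Nat.card K ^ (m + r).choose r := by
  let B : Module.Basis _ K (restrictTotalDegree (Fin m) K r) := basisRestrictSupport K _
  have := Module.Finite.finite_basis B
  rw [Nat.card_congr B.equivFun.toEquiv, Nat.card_fun]
  exact Nat.pow_le_pow_right Nat.card_pos (Finsupp.natCard_sum_le_le_choose m r)

theorem exists_totalDegree_le_one_eval_eq {σ K : Type*} [Field K] {a b : σ → K} (hab : a ≠ b)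
    (y z : K) : ∃ f : MvPolynomial σ K, f.totalDegree ≤ 1 ∧ eval a f = y ∧ eval b f = z := by
  obtain ⟨i, hi⟩ := Function.ne_iff.mp hab
  have hi' : b i - a i ≠ 0 := sub_ne_zero.mpr (Ne.symm hi)
  refine ⟨C y + C ((z - y) / (b i - a i)) * (X i - C (a i)), ?_, by simp, ?_⟩
  · refine (totalDegree_add _ _).trans (max_le (by simp) ?_)
    refine (totalDegree_mul _ _).trans ?_
    simpa using (totalDegree_sub_C_le (X i) (a i)).trans (totalDegree_X i).le
  · simp [div_mul_cancel₀ _ hi']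

theorem card_filter_eval_eq_mul_le {m r : ℕ} {K : Type*} [Field K] [Fintype K] [DecidableEq K]
    (hr : 1 ≤ r) {L : Finset (MvPolynomial (Fin m) K)} (hL : ∀ f ∈ L, f.totalDegree ≤ r)
    {a b : Fin m → K} (hab : a ≠ b) (y z : K) :
    #{f ∈ L | eval a f = y ∧ eval b f = z} * Fintype.card K ^ 2 ≤
      Fintype.card K ^ (m + r).choose r := by
  let U := restrictTotalDegree (Fin m) K r
  let φ : U →+ K × K :=
    ((aeval a).toLinearMap.prod (aeval b).toLinearMap ∘ₗ U.subtype).toAddMonoidHom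
  have hφ : Function.Surjective φ := fun ⟨y, z⟩ => by
    obtain ⟨f, hf, hfy, hfz⟩ := exists_totalDegree_le_one_eval_eq hab y z
    exact ⟨⟨f, (mem_restrictTotalDegree _ _ _).mpr (hf.trans hr)⟩, by simp [φ, hfy, hfz]⟩
  have : Finite U := Module.finite_of_finite K
  let e (f : {f ∈ L | eval a f = y ∧ eval b f = z}) : U :=
    ⟨f, (mem_restrictTotalDegree _ _ _).mpr (hL f (mem_filter.mp f.2).1)⟩
  have hcard := φ.card_mul_card_le_of_injective hφ (e := e) (fun f g hfg => by
      simpa [e] using congrArg Subtype.val hfg) (y := (y, z)) fun f => by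
    simp [φ, e, (mem_filter.mp f.2).2]
  rw [Nat.card_eq_finsetCard, Nat.card_prod, ← sq, Nat.card_eq_fintype_card] at hcard
  exact hcard.trans (Nat.card_eq_fintype_card (α := K) ▸ natCard_restrictTotalDegree_le m r)

end MvPolynomial

theorem card_filter_incident_incident_le {m r : ℕ} {F : Type*} [Field F] [Fintype F]
    [DecidableEq F] (hr : 1 ≤ r) {L : Finset (MvPolynomial (Fin m) F)}
    (hL : ∀ f ∈ L, f.totalDegree ≤ r) {v v' : Fin (m + 1) → F} (hvv' : v ≠ v') :
    (#{f ∈ L | MvPolynomial.eval (Fin.init v) f = v (Fin.last m) ∧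
        MvPolynomial.eval (Fin.init v') f = v' (Fin.last m)} : ℝ) ≤
      (Fintype.card F : ℝ) ^ (((m + r).choose r : ℝ) - 2) := by
  by_cases hinit : Fin.init v = Fin.init v'
  · have hempty : #{f ∈ L | MvPolynomial.eval (Fin.init v) f = v (Fin.last m) ∧
        MvPolynomial.eval (Fin.init v') f = v' (Fin.last m)} = 0 := by
      rw [card_eq_zero, filter_eq_empty_iff]
      rintro f - ⟨hv, hv'⟩
      apply hvv'
      rw [← Fin.snoc_init_self v, ← Fin.snoc_init_self v', hinit, ← hv, ← hv', hinit]
    rw [hempty, Nat.cast_zero]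
    positivity
  · have hq : (0 : ℝ) < Fintype.card F := by exact_mod_cast Fintype.card_pos
    rw [Real.rpow_sub hq, Real.rpow_natCast, Real.rpow_two, le_div_iff₀ (by positivity)]
    exact_mod_cast MvPolynomial.card_filter_eval_eq_mul_le hr hL hinit _ _

/-- Dual Cauchy–Schwarz point–polynomial incidence bound:
`I(P,L) ≤ |L| + q^(dim V_{m,r}/2 − 1)·|P|·|L|^(1/2)` with `dim V_{m,r} = C(m+r,r)`. -/
theorem stmt19 {m r : ℕ} {F : Type} [Field F] [Fintype F] [DecidableEq F] (hr : 1 ≤ r)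
    (P : Finset (Fin (m + 1) → F)) (L : Finset (MvPolynomial (Fin m) F))
    (hL : ∀ f ∈ L, f.totalDegree ≤ r) :
    ((∑ v ∈ P, (L.filter fun f =>
        MvPolynomial.eval (fun j : Fin m => v j.castSucc) f = v (Fin.last m)).card : ℕ) : ℝ) ≤
      (L.card : ℝ) +
        (Fintype.card F : ℝ) ^ (((m + r).choose r : ℝ) / 2 - 1) * (P.card : ℝ) *
          Real.sqrt (L.card : ℝ) := by
  have hq : (0 : ℝ) ≤ Fintype.card F := Nat.cast_nonneg _
  refine sum_card_filter_le_of_card_filter_and_le _ (Real.rpow_nonneg hq _)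
    fun v _ v' _ hvv' => ?_
  have hexp : (((m + r).choose r : ℝ) / 2 - 1) * (2 : ℕ) = (m + r).choose r - 2 := by
    push_cast
    ring
  rw [← Real.rpow_natCast, ← Real.rpow_mul hq, hexp]
  exact card_filter_incident_incident_le hr hL hvv'
end
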